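/- arXiv:2206.04559 — 10 statements merged into one kernel-verified Lean document; each statement's English description precedes it below -/
import Mathlib

section
/- Let K be a field of characteristic 2 and let L/K be a finite Galois extension whose Galois group is G = {1, σ, τ, στ}, isomorphic to ℤ/2 × ℤ/2. Then the image of the K-linear endomorphism of L given by x ↦ στ(x) − σ(x) − τ(x) + x (that is, the operator (σ−1)(τ−1)) is exactly the fixed field K ⊆ L, and the kernel of this endomorphism has dimension 3 as a K-vector space. -/
/-! In characteristic two the signs disappear, so `(σ - 1)(τ - 1) = στ + σ + τ + 1` is the sum of
all elements of the Galois group, i.e. the trace `L → K` followed by the inclusion `K → L`.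
The trace of a separable extension is surjective, so the image is `K` and the kernel has
dimension `[L : K] - 1 = 3`. -/

section KleinFour

variable {G : Type*} [Group G] {σ τ : G}

theorem Finset.univ_eq_of_forall_eq_one_or [Fintype G] [DecidableEq G]
    (hall : ∀ g : G, g = 1 ∨ g = σ ∨ g = τ ∨ g = σ * τ) :
    (Finset.univ : Finset G) = {1, σ, τ, σ * τ} := by
  ext g
  simpa using hall g

theorem Finset.sum_univ_eq_of_forall_eq_one_or [Fintype G] {M : Type*} [AddCommMonoid M]
    (hτ2 : τ * τ = 1) (hσ1 : σ ≠ 1) (hτ1 : τ ≠ 1) (hστ : σ ≠ τ)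
    (hall : ∀ g : G, g = 1 ∨ g = σ ∨ g = τ ∨ g = σ * τ) (f : G → M) :
    ∑ g, f g = f 1 + f σ + f τ + f (σ * τ) := by
  classical
  have hστ1 : σ * τ ≠ 1 := fun h ↦
    hστ ((eq_inv_of_mul_eq_one_left h).trans (inv_eq_of_mul_eq_one_right hτ2))
  have hστσ : σ * τ ≠ σ := mul_eq_left.not.mpr hτ1
  have hσττ : σ * τ ≠ τ := mul_eq_right.not.mpr hσ1
  rw [Finset.univ_eq_of_forall_eq_one_or hall,
    Finset.sum_insert (by simp [hσ1.symm, hτ1.symm, hστ1.symm]),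
    Finset.sum_insert (by simp [hστ, hστσ.symm]),
    Finset.sum_insert (by simp [hσττ.symm]), Finset.sum_singleton]
  abel

theorem Fintype.card_eq_four_of_forall_eq_one_or [Fintype G]
    (hτ2 : τ * τ = 1) (hσ1 : σ ≠ 1) (hτ1 : τ ≠ 1) (hστ : σ ≠ τ)
    (hall : ∀ g : G, g = 1 ∨ g = σ ∨ g = τ ∨ g = σ * τ) :
    Fintype.card G = 4 := by
  rw [Fintype.card_eq_sum_ones,
    Finset.sum_univ_eq_of_forall_eq_one_or hτ2 hσ1 hτ1 hστ hall]

end KleinFour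

section Trace

variable (K L : Type*) [Field K] [Field L] [Algebra K L] [FiniteDimensional K L]
  [Algebra.IsSeparable K L]

theorem range_algebraMap_comp_trace :
    LinearMap.range (Algebra.linearMap K L ∘ₗ Algebra.trace K L) =
      LinearMap.range (Algebra.linearMap K L) := by
  rw [LinearMap.range_comp, LinearMap.range_eq_top.mpr (Algebra.trace_surjective K L),
    Submodule.map_top]

theorem finrank_ker_algebraMap_comp_trace_add_one :
    Module.finrank K (LinearMap.ker (Algebra.linearMap K L ∘ₗ Algebra.trace K L)) + 1 =
      Module.finrank K L := by
  have hrank := LinearMap.finrank_range_add_finrank_ker (Algebra.trace K L)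
  rw [LinearMap.range_eq_top.mpr (Algebra.trace_surjective K L), finrank_top,
    Module.finrank_self] at hrank
  rw [LinearMap.ker_comp, LinearMap.ker_eq_bot.mpr (algebraMap K L).injective,
    Submodule.comap_bot, ← hrank, add_comm]

end Trace

theorem klein_four_sigma_tau_operator_range_and_kernel_general
    (K L : Type*) [Field K] [Field L] [Algebra K L]
    [FiniteDimensional K L] [IsGalois K L] (hchar : CharP K 2)
    (σ τ : L ≃ₐ[K] L)
    (hτ2 : τ * τ = 1)
    (hσ1 : σ ≠ 1) (hτ1 : τ ≠ 1) (hστ : σ ≠ τ)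
    (hall : ∀ g : L ≃ₐ[K] L, g = 1 ∨ g = σ ∨ g = τ ∨ g = σ * τ) :
    LinearMap.range
        ((σ.toLinearMap ∘ₗ τ.toLinearMap) - σ.toLinearMap - τ.toLinearMap
          + (LinearMap.id : L →ₗ[K] L))
      = LinearMap.range (Algebra.linearMap K L) ∧
    Module.finrank K
        (LinearMap.ker
          ((σ.toLinearMap ∘ₗ τ.toLinearMap) - σ.toLinearMap - τ.toLinearMap
            + (LinearMap.id : L →ₗ[K] L))) = 3 := by
  have : CharP L 2 := charP_of_injective_algebraMap (algebraMap K L).injective 2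
  have hT : (σ.toLinearMap ∘ₗ τ.toLinearMap) - σ.toLinearMap - τ.toLinearMap
      + (LinearMap.id : L →ₗ[K] L) = Algebra.linearMap K L ∘ₗ Algebra.trace K L := by
    ext x
    have hsum := Finset.sum_univ_eq_of_forall_eq_one_or hτ2 hσ1 hτ1 hστ hall (· x)
    simp only [LinearMap.add_apply, LinearMap.sub_apply, LinearMap.comp_apply,
      AlgEquiv.toLinearMap_apply, LinearMap.id_apply, Algebra.linearMap_apply,
      trace_eq_sum_automorphisms, hsum, AlgEquiv.one_apply, AlgEquiv.mul_apply,
      CharTwo.sub_eq_add]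
    abel
  have hdeg : Module.finrank K L = 4 := by
    rw [← IsGalois.card_aut_eq_finrank, Nat.card_eq_fintype_card,
      Fintype.card_eq_four_of_forall_eq_one_or hτ2 hσ1 hτ1 hστ hall]
  have hker := finrank_ker_algebraMap_comp_trace_add_one K L
  rw [hT]
  exact ⟨range_algebraMap_comp_trace K L, by omega⟩

/-- For a finite Galois extension `L/K` of characteristic-two fields with
Galois group the Klein four group `{1, σ, τ, στ}`, the image of the operator
`(σ−1)(τ−1) : x ↦ στ(x) − σ(x) − τ(x) + x` equals the fixed field `K ⊆ L`, and its
kernel has `K`-dimension 3. -/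
theorem klein_four_sigma_tau_operator_range_and_kernel
    (K L : Type*) [Field K] [Field L] [Algebra K L]
    [FiniteDimensional K L] [IsGalois K L] (hchar : CharP K 2)
    (σ τ : L ≃ₐ[K] L)
    (hσ2 : σ * σ = 1) (hτ2 : τ * τ = 1) (hcomm : σ * τ = τ * σ)
    (hσ1 : σ ≠ 1) (hτ1 : τ ≠ 1) (hστ : σ ≠ τ)
    (hall : ∀ g : L ≃ₐ[K] L, g = 1 ∨ g = σ ∨ g = τ ∨ g = σ * τ) :
    LinearMap.range
        ((σ.toLinearMap ∘ₗ τ.toLinearMap) - σ.toLinearMap - τ.toLinearMap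
          + (LinearMap.id : L →ₗ[K] L))
      = LinearMap.range (Algebra.linearMap K L) ∧
    Module.finrank K
        (LinearMap.ker
          ((σ.toLinearMap ∘ₗ τ.toLinearMap) - σ.toLinearMap - τ.toLinearMap
            + (LinearMap.id : L →ₗ[K] L))) = 3 :=
  klein_four_sigma_tau_operator_range_and_kernel_general K L hchar σ τ hτ2 hσ1 hτ1 hστ hall
end

section
/- Let K be a field of characteristic 2 and let L/K be a finite Galois extension whose Galois group is G = {1, σ, τ, στ}, isomorphic to ℤ/2 × ℤ/2. For every pair (a, b) ∈ K × K with (a, b) ≠ (0, 0), the kernel of the K-linear endomorphism of L given by x ↦ a(σ(x) − x) + b(τ(x) − x) has dimension 2 as a K-vector space; moreover this kernel contains K and is contained in the kernel of the endomorphism x ↦ στ(x) − σ(x) − τ(x) + x. -/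
/-!
Put `S = σ - 1` and `T = τ - 1`. In characteristic 2 these are commuting square-zero
endomorphisms of `L`, and `S T = Σ_{g ∈ G} g` is the trace, so `S T θ ≠ 0` for some `θ`.
For `D = a S + b T` both `ker D` and `range D` then contain a pair of independent vectors
(`S T θ` with `a S θ - b T θ`, resp. with `D θ`), hence both have dimension 2 inside the
4-dimensional space `L`. If `D x = 0` and, say, `a ≠ 0`, applying `T` gives `a S T x = 0`.
-/

open Module LinearMap

section SquareZero

variable {K V : Type*} [Field K] [AddCommGroup V] [Module K V] {S T : Module.End K V}

theorem ker_smul_add_smul_le_ker_mul (hS : S * S = 0) (hT : T * T = 0) (hST : Commute S T)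
    {a b : K} (hab : a ≠ 0 ∨ b ≠ 0) : ker (a • S + b • T) ≤ ker (S * T) := by
  have hSS (x : V) : S (S x) = 0 := by simpa using LinearMap.congr_fun hS x
  have hTT (x : V) : T (T x) = 0 := by simpa using LinearMap.congr_fun hT x
  have hTS (x : V) : T (S x) = S (T x) := by simpa using (LinearMap.congr_fun hST.eq x).symm
  intro x hx
  have hDx : a • S x + b • T x = 0 := by simpa using hx
  rw [mem_ker, Module.End.mul_apply]
  rcases hab with ha | hb
  · simpa [hTT, hTS, ha] using congrArg T hDx
  · simpa [hSS, hb] using congrArg S hDx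

theorem linearIndependent_pair_of_apply_ne_zero (hS : S * S = 0) (hT : T * T = 0)
    (hST : Commute S T) {θ : V} (hθ : S (T θ) ≠ 0) {a b : K} (hab : a ≠ 0 ∨ b ≠ 0) :
    LinearIndependent K ![S (T θ), a • S θ + b • T θ] := by
  have hSS (x : V) : S (S x) = 0 := by simpa using LinearMap.congr_fun hS x
  have hTT (x : V) : T (T x) = 0 := by simpa using LinearMap.congr_fun hT x
  have hTS (x : V) : T (S x) = S (T x) := by simpa using (LinearMap.congr_fun hST.eq x).symm
  rw [LinearIndependent.pair_iff]
  intro s t hst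
  have htb : (t * b) • S (T θ) = 0 := by simpa [hSS, mul_smul] using congrArg S hst
  have hta : (t * a) • S (T θ) = 0 := by simpa [hTT, hTS, mul_smul] using congrArg T hst
  have ht : t = 0 := by
    rcases hab with ha | hb
    · simpa [ha, hθ] using hta
    · simpa [hb, hθ] using htb
  subst ht
  simpa [hθ] using hst

theorem two_le_finrank_of_linearIndependent_pair [FiniteDimensional K V] {W : Submodule K V}
    {u v : V} (huv : LinearIndependent K ![u, v]) (hu : u ∈ W) (hv : v ∈ W) :
    2 ≤ finrank K W := by
  have hle : Submodule.span K (Set.range ![u, v]) ≤ W := by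
    rw [Submodule.span_le]
    rintro _ ⟨i, rfl⟩
    fin_cases i <;> assumption
  simpa [finrank_span_eq_card huv] using Submodule.finrank_mono hle

theorem finrank_ker_smul_add_smul [FiniteDimensional K V] (h4 : finrank K V = 4)
    (hS : S * S = 0) (hT : T * T = 0) (hST : Commute S T) {θ : V} (hθ : S (T θ) ≠ 0)
    {a b : K} (hab : a ≠ 0 ∨ b ≠ 0) : finrank K (ker (a • S + b • T)) = 2 := by
  have hSS (x : V) : S (S x) = 0 := by simpa using LinearMap.congr_fun hS x
  have hTT (x : V) : T (T x) = 0 := by simpa using LinearMap.congr_fun hT x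
  have hTS (x : V) : T (S x) = S (T x) := by simpa using (LinearMap.congr_fun hST.eq x).symm
  have hker : 2 ≤ finrank K (ker (a • S + b • T)) := by
    refine two_le_finrank_of_linearIndependent_pair
      (linearIndependent_pair_of_apply_ne_zero hS hT hST hθ (a := a) (b := -b)
        (by rwa [neg_ne_zero])) ?_ ?_
    · simp [hSS, hTT, hTS]
    · simp [hSS, hTT, hTS, smul_smul, mul_comm a b]
  have hrange : 2 ≤ finrank K (range (a • S + b • T)) := by
    refine two_le_finrank_of_linearIndependent_pair
      (linearIndependent_pair_of_apply_ne_zero hS hT hST hθ hab) ?_ ⟨θ, by simp⟩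
    rcases hab with ha | hb
    · exact ⟨a⁻¹ • T θ, by simp [hTT, smul_smul, ha]⟩
    · exact ⟨b⁻¹ • S θ, by simp [hSS, hTS, smul_smul, hb]⟩
  have := finrank_range_add_finrank_ker (a • S + b • T)
  omega

end SquareZero

theorem sub_one_mul_self_eq_zero {R : Type*} [Ring R] [CharP R 2] {f : R} (hf : f * f = 1) :
    (f - 1) * (f - 1) = 0 :=
  calc (f - 1) * (f - 1) = f * f + 1 - 2 * f := by noncomm_ring
    _ = 0 := by rw [hf, one_add_one_eq_two, CharTwo.two_eq_zero, zero_mul, sub_zero]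

theorem comp_sub_sub_add_id_eq_sub_one_mul_sub_one {R M : Type*} [Semiring R] [AddCommGroup M]
    [Module R M] (f g : Module.End R M) : f ∘ₗ g - f - g + LinearMap.id = (f - 1) * (g - 1) := by
  change f * g - f - g + 1 = _
  noncomm_ring

section KleinFour

variable {G : Type*} [Group G] [Fintype G] {σ τ : G}

theorem Fintype.sum_eq_klein_four {M : Type*} [AddCommMonoid M]
    (hσ : σ ≠ 1) (hτ : τ ≠ 1) (hστ : σ ≠ τ) (hτ2 : τ * τ = 1)
    (hall : ∀ g : G, g = 1 ∨ g = σ ∨ g = τ ∨ g = σ * τ) (f : G → M) :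
    ∑ g, f g = f 1 + f σ + f τ + f (σ * τ) := by
  classical
  have huniv : (Finset.univ : Finset G) = {1, σ, τ, σ * τ} := by
    ext g
    simpa using hall g
  have hστ1 : σ * τ ≠ 1 := by
    rwa [Ne, mul_eq_one_iff_eq_inv, inv_eq_of_mul_eq_one_right hτ2]
  rw [huniv, Finset.sum_insert, Finset.sum_insert, Finset.sum_insert, Finset.sum_singleton,
    add_assoc, add_assoc]
  all_goals simp [hσ, hτ, hστ, hστ1.symm, hσ.symm, hτ.symm]

theorem Fintype.card_eq_four_of_klein_four
    (hσ : σ ≠ 1) (hτ : τ ≠ 1) (hστ : σ ≠ τ) (hτ2 : τ * τ = 1)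
    (hall : ∀ g : G, g = 1 ∨ g = σ ∨ g = τ ∨ g = σ * τ) : Fintype.card G = 4 := by
  rw [Fintype.card_eq_sum_ones, Fintype.sum_eq_klein_four hσ hτ hστ hτ2 hall]

end KleinFour

theorem algebraMap_trace_eq_sub_one_mul_sub_one {K L : Type*} [Field K] [Field L] [Algebra K L]
    [FiniteDimensional K L] [IsGalois K L] [CharP K 2] {σ τ : L ≃ₐ[K] L}
    (hσ : σ ≠ 1) (hτ : τ ≠ 1) (hστ : σ ≠ τ) (hτ2 : τ * τ = 1)
    (hall : ∀ g : L ≃ₐ[K] L, g = 1 ∨ g = σ ∨ g = τ ∨ g = σ * τ) (x : L) :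
    algebraMap K L (Algebra.trace K L x) =
      ((σ.toLinearMap - 1) * (τ.toLinearMap - 1) : Module.End K L) x := by
  have : CharP L 2 := charP_of_injective_algebraMap' K 2
  rw [trace_eq_sum_automorphisms, Fintype.sum_eq_klein_four hσ hτ hστ hτ2 hall]
  simp only [AlgEquiv.one_apply, AlgEquiv.mul_apply, Module.End.mul_apply, LinearMap.sub_apply,
    AlgEquiv.toLinearMap_apply, Module.End.one_apply, map_add, CharTwo.sub_eq_add]
  ring

/-- For a finite Galois extension `L/K` of characteristic-two fields with
Galois group the Klein four group `{1, σ, τ, στ}`, and every `(a, b) ≠ (0, 0)` in `K × K`,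
the kernel of `x ↦ a(σ(x) − x) + b(τ(x) − x)` has `K`-dimension 2, contains `K`, and is
contained in the kernel of `x ↦ στ(x) − σ(x) − τ(x) + x`. -/
theorem klein_four_ab_operator_kernel
    (K L : Type*) [Field K] [Field L] [Algebra K L]
    [FiniteDimensional K L] [IsGalois K L] (hchar : CharP K 2)
    (σ τ : L ≃ₐ[K] L)
    (hσ2 : σ * σ = 1) (hτ2 : τ * τ = 1) (hcomm : σ * τ = τ * σ)
    (hσ1 : σ ≠ 1) (hτ1 : τ ≠ 1) (hστ : σ ≠ τ)
    (hall : ∀ g : L ≃ₐ[K] L, g = 1 ∨ g = σ ∨ g = τ ∨ g = σ * τ)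
    (a b : K) (hab : (a, b) ≠ (0, 0)) :
    Module.finrank K
        (LinearMap.ker
          (a • (σ.toLinearMap - (LinearMap.id : L →ₗ[K] L))
            + b • (τ.toLinearMap - (LinearMap.id : L →ₗ[K] L)))) = 2 ∧
    LinearMap.range (Algebra.linearMap K L)
      ≤ LinearMap.ker
          (a • (σ.toLinearMap - (LinearMap.id : L →ₗ[K] L))
            + b • (τ.toLinearMap - (LinearMap.id : L →ₗ[K] L))) ∧
    LinearMap.ker
        (a • (σ.toLinearMap - (LinearMap.id : L →ₗ[K] L))
          + b • (τ.toLinearMap - (LinearMap.id : L →ₗ[K] L)))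
      ≤ LinearMap.ker
          ((σ.toLinearMap ∘ₗ τ.toLinearMap) - σ.toLinearMap - τ.toLinearMap
            + (LinearMap.id : L →ₗ[K] L)) := by
  have hab' : a ≠ 0 ∨ b ≠ 0 := by
    contrapose! hab
    simp [hab]
  have : CharP (Module.End K L) 2 := charP_of_injective_algebraMap' K 2
  have hS :=
    sub_one_mul_self_eq_zero (f := σ.toLinearMap) (congrArg AlgEquiv.toLinearMap hσ2)
  have hT :=
    sub_one_mul_self_eq_zero (f := τ.toLinearMap) (congrArg AlgEquiv.toLinearMap hτ2)
  have hST : Commute (σ.toLinearMap - 1 : Module.End K L) (τ.toLinearMap - 1) :=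
    (((show Commute σ τ from hcomm).map (AlgEquiv.toLinearMapHom K L)).sub_right
      (Commute.one_right _)).sub_left (Commute.one_left _)
  obtain ⟨θ, hθ⟩ : ∃ θ : L, Algebra.trace K L θ ≠ 0 :=
    DFunLike.ne_iff.mp (Algebra.trace_ne_zero K L)
  have hSTθ : (σ.toLinearMap - 1 : Module.End K L) ((τ.toLinearMap - 1) θ) ≠ 0 := by
    rw [← Module.End.mul_apply, ← algebraMap_trace_eq_sub_one_mul_sub_one hσ1 hτ1 hστ hτ2 hall]
    exact (map_ne_zero _).mpr hθ
  have h4 : finrank K L = 4 := by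
    rw [← IsGalois.card_aut_eq_finrank, Nat.card_eq_fintype_card,
      Fintype.card_eq_four_of_klein_four hσ1 hτ1 hστ hτ2 hall]
  refine ⟨finrank_ker_smul_add_smul h4 hS hT hST hSTθ hab', ?_, ?_⟩
  · rintro _ ⟨c, rfl⟩
    simp
  · rw [comp_sub_sub_add_id_eq_sub_one_mul_sub_one]
    exact ker_smul_add_smul_le_ker_mul hS hT hST hab'
end

section
/- Let K be a field of characteristic 2 and let L/K be a finite Galois extension whose Galois group is G = {1, σ, τ, στ}, isomorphic to ℤ/2 × ℤ/2. Let (a, b) ∈ K × K with (a, b) ≠ (0, 0). Then: (i) the image of the kernel of (σ−1)(τ−1) (an endomorphism of L) under the map x ↦ a(σ(x) − x) + b(τ(x) − x) equals K; and (ii) if b ≠ 0, the image of the kernel of x ↦ a(σ(x) − x) + b(τ(x) − x) under the map x ↦ σ(x) − x equals K. -/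
/-- For a finite Galois extension `L/K` of characteristic-two fields with
Galois group the Klein four group `{1, σ, τ, στ}`, and `(a, b) ≠ (0, 0)` in `K × K`:
(i) the image of the kernel of `(σ−1)(τ−1)` under `x ↦ a(σ(x) − x) + b(τ(x) − x)`
equals `K`; (ii) if `b ≠ 0`, the image of the kernel of `x ↦ a(σ(x) − x) + b(τ(x) − x)`
under `x ↦ σ(x) − x` equals `K`. -/
theorem klein_four_images_of_kernels
    (K L : Type*) [Field K] [Field L] [Algebra K L]
    [FiniteDimensional K L] [IsGalois K L] (hchar : CharP K 2)
    (σ τ : L ≃ₐ[K] L)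
    (hσ2 : σ * σ = 1) (hτ2 : τ * τ = 1) (hcomm : σ * τ = τ * σ)
    (hσ1 : σ ≠ 1) (hτ1 : τ ≠ 1) (hστ : σ ≠ τ)
    (hall : ∀ g : L ≃ₐ[K] L, g = 1 ∨ g = σ ∨ g = τ ∨ g = σ * τ)
    (a b : K) (hab : (a, b) ≠ (0, 0)) :
    Submodule.map
        (a • (σ.toLinearMap - (LinearMap.id : L →ₗ[K] L))
          + b • (τ.toLinearMap - (LinearMap.id : L →ₗ[K] L)))
        (LinearMap.ker
          ((σ.toLinearMap ∘ₗ τ.toLinearMap) - σ.toLinearMap - τ.toLinearMap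
            + (LinearMap.id : L →ₗ[K] L)))
      = LinearMap.range (Algebra.linearMap K L) ∧
    (b ≠ 0 →
      Submodule.map (σ.toLinearMap - (LinearMap.id : L →ₗ[K] L))
          (LinearMap.ker
            (a • (σ.toLinearMap - (LinearMap.id : L →ₗ[K] L))
              + b • (τ.toLinearMap - (LinearMap.id : L →ₗ[K] L))))
        = LinearMap.range (Algebra.linearMap K L)) := by
  classical
  haveI hL2 : CharP L 2 := charP_of_injective_algebraMap (algebraMap K L).injective 2
  have htwo : (2 : L) = 0 := CharTwo.two_eq_zero
  have hσσ : ∀ x : L, σ (σ x) = x := fun x => by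
    have h := AlgEquiv.ext_iff.mp hσ2 x; simpa [AlgEquiv.mul_apply] using h
  have hττ : ∀ x : L, τ (τ x) = x := fun x => by
    have h := AlgEquiv.ext_iff.mp hτ2 x; simpa [AlgEquiv.mul_apply] using h
  have hcp : ∀ x : L, τ (σ x) = σ (τ x) := fun x => by
    have h := AlgEquiv.ext_iff.mp hcomm x; simpa [AlgEquiv.mul_apply] using h.symm
  have hDapp : ∀ x : L,
      (a • (σ.toLinearMap - (LinearMap.id : L →ₗ[K] L))
        + b • (τ.toLinearMap - (LinearMap.id : L →ₗ[K] L))) x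
      = algebraMap K L a * (σ x - x) + algebraMap K L b * (τ x - x) := fun x => by
    simp [Algebra.smul_def]
  have hNapp : ∀ x : L,
      ((σ.toLinearMap ∘ₗ τ.toLinearMap) - σ.toLinearMap - τ.toLinearMap
        + (LinearMap.id : L →ₗ[K] L)) x = σ (τ x) - σ x - τ x + x := fun x => by
    simp
  -- elements fixed by σ and τ are in the image of K
  have memK : ∀ y : L, σ y = y → τ y = y →
      y ∈ LinearMap.range (Algebra.linearMap K L) := by
    intro y h1 h2
    have hbot : IntermediateField.fixedField (⊤ : Subgroup (L ≃ₐ[K] L)) = ⊥ :=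
      ((IsGalois.tfae).out 0 1).mp ‹IsGalois K L›
    have h3 : y ∈ (⊥ : IntermediateField K L) := by
      rw [← hbot]
      rintro ⟨g, -⟩
      show g y = y
      rcases hall g with rfl | rfl | rfl | rfl
      · rfl
      · exact h1
      · exact h2
      · show σ (τ y) = y
        rw [h2, h1]
    rw [IntermediateField.mem_bot] at h3
    obtain ⟨c, hc⟩ := h3
    exact ⟨c, by simpa [Algebra.linearMap_apply] using hc⟩
  -- the sum over the group is the trace
  have hστ1 : σ * τ ≠ 1 := fun h => hστ (mul_right_cancel (h.trans hτ2.symm))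
  have hσστ : σ ≠ σ * τ := fun h => hτ1 (mul_left_cancel ((mul_one σ).trans h)).symm
  have hτστ : τ ≠ σ * τ := fun h => hσ1 (mul_right_cancel ((one_mul τ).trans h)).symm
  have huniv : (Finset.univ : Finset (L ≃ₐ[K] L)) = {1, σ, τ, σ * τ} := by
    ext g
    simpa using hall g
  have m1 : (1 : L ≃ₐ[K] L) ∉ ({σ, τ, σ * τ} : Finset (L ≃ₐ[K] L)) := by
    simp only [Finset.mem_insert, Finset.mem_singleton]
    push_neg
    exact ⟨hσ1.symm, hτ1.symm, hστ1.symm⟩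
  have m2 : σ ∉ ({τ, σ * τ} : Finset (L ≃ₐ[K] L)) := by
    simp only [Finset.mem_insert, Finset.mem_singleton]
    push_neg
    exact ⟨hστ, hσστ⟩
  have m3 : τ ∉ ({σ * τ} : Finset (L ≃ₐ[K] L)) := by
    simpa using hτστ
  have hNtr : ∀ y : L, σ (τ y) - σ y - τ y + y
      = algebraMap K L (Algebra.trace K L y) := by
    intro y
    have hs : algebraMap K L (Algebra.trace K L y) = y + (σ y + (τ y + σ (τ y))) := by
      rw [trace_eq_sum_automorphisms, huniv, Finset.sum_insert m1, Finset.sum_insert m2,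
        Finset.sum_insert m3, Finset.sum_singleton]
      simp [AlgEquiv.mul_apply]
    linear_combination -hs - (σ y + τ y) * htwo
  constructor
  · -- part (i)
    apply le_antisymm
    · rintro y ⟨x, hx, rfl⟩
      simp only [SetLike.mem_coe, LinearMap.mem_ker] at hx
      have hx' : σ (τ x) - σ x - τ x + x = 0 := by rw [← hNapp x]; exact hx
      rw [hDapp x]
      refine memK _ ?_ ?_
      · simp only [map_add, map_mul, map_sub, AlgEquiv.commutes, hσσ]
        linear_combination (algebraMap K L b) * hx'
          + (algebraMap K L a) * (x - σ x) * htwo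
      · simp only [map_add, map_mul, map_sub, AlgEquiv.commutes, hττ, hcp]
        linear_combination (algebraMap K L a) * hx'
          + (algebraMap K L b) * (x - τ x) * htwo
    · rintro y ⟨c, rfl⟩
      by_cases hb0 : b = 0
      · have ha : a ≠ 0 := by
          intro ha
          exact hab (by rw [ha, hb0])
        obtain ⟨θ, hθ⟩ := Algebra.trace_surjective K L (a⁻¹ * c)
        have hNθ : σ (τ θ) - σ θ - τ θ + θ = algebraMap K L (a⁻¹ * c) := by
          rw [hNtr θ, hθ]
        refine ⟨τ θ - θ, ?_, ?_⟩
        · simp only [SetLike.mem_coe, LinearMap.mem_ker]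
          rw [hNapp]
          simp only [map_sub, hττ, hσσ, hcp]
          linear_combination (σ θ - σ (τ θ) + τ θ - θ) * htwo
        · rw [hDapp]
          simp only [map_sub, hττ, hcp]
          have hMac : algebraMap K L a * algebraMap K L (a⁻¹ * c) = algebraMap K L c := by
            rw [← map_mul, ← mul_assoc, mul_inv_cancel₀ ha, one_mul]
          rw [Algebra.linearMap_apply]
          linear_combination (algebraMap K L a) * hNθ + hMac
            + (algebraMap K L b) * (θ - τ θ) * htwo
      · obtain ⟨θ, hθ⟩ := Algebra.trace_surjective K L (b⁻¹ * c)
        have hNθ : σ (τ θ) - σ θ - τ θ + θ = algebraMap K L (b⁻¹ * c) := by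
          rw [hNtr θ, hθ]
        refine ⟨σ θ - θ, ?_, ?_⟩
        · simp only [SetLike.mem_coe, LinearMap.mem_ker]
          rw [hNapp]
          simp only [map_sub, hσσ, hττ, hcp]
          linear_combination (τ θ - σ (τ θ) + σ θ - θ) * htwo
        · rw [hDapp]
          simp only [map_sub, hσσ, hcp]
          have hMbc : algebraMap K L b * algebraMap K L (b⁻¹ * c) = algebraMap K L c := by
            rw [← map_mul, ← mul_assoc, mul_inv_cancel₀ hb0, one_mul]
          rw [Algebra.linearMap_apply]
          linear_combination (algebraMap K L b) * hNθ + hMbc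
            + (algebraMap K L a) * (θ - σ θ) * htwo
  · -- part (ii)
    intro hb
    apply le_antisymm
    · rintro y ⟨x, hx, rfl⟩
      simp only [SetLike.mem_coe, LinearMap.mem_ker] at hx
      have hx' : algebraMap K L a * (σ x - x) + algebraMap K L b * (τ x - x) = 0 := by
        rw [← hDapp x]; exact hx
      have hx2 : algebraMap K L a * (x - σ x)
          + algebraMap K L b * (σ (τ x) - σ x) = 0 := by
        have h := congrArg σ hx'
        simp only [map_add, map_mul, map_sub, map_zero, AlgEquiv.commutes, hσσ] at h
        linear_combination h
      rw [show (σ.toLinearMap - (LinearMap.id : L →ₗ[K] L)) x = σ x - x by simp]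
      refine memK _ ?_ ?_
      · simp only [map_sub, hσσ]
        linear_combination (x - σ x) * htwo
      · simp only [map_sub, hcp]
        have hMb : algebraMap K L b ≠ 0 := fun h =>
          hb ((algebraMap K L).injective (by rw [h, map_zero]))
        have key : algebraMap K L b * (σ (τ x) - τ x)
            = algebraMap K L b * (σ x - x) := by
          linear_combination hx' + hx2
            + (algebraMap K L b * x - algebraMap K L b * τ x) * htwo
        exact mul_left_cancel₀ hMb key
    · rintro y ⟨c, rfl⟩
      obtain ⟨θ, hθ⟩ := Algebra.trace_surjective K L (b⁻¹ * c)
      have hNθ : σ (τ θ) - σ θ - τ θ + θ = algebraMap K L (b⁻¹ * c) := by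
        rw [hNtr θ, hθ]
      refine ⟨algebraMap K L a * (σ θ - θ) + algebraMap K L b * (τ θ - θ), ?_, ?_⟩
      · simp only [SetLike.mem_coe, LinearMap.mem_ker]
        rw [hDapp]
        simp only [map_add, map_mul, map_sub, AlgEquiv.commutes, hσσ, hττ, hcp]
        linear_combination ((algebraMap K L a) ^ 2 * (θ - σ θ)
          + (algebraMap K L b) ^ 2 * (θ - τ θ)
          + algebraMap K L a * algebraMap K L b * (σ (τ θ) - σ θ - τ θ + θ)) * htwo
      · rw [show ∀ z : L, (σ.toLinearMap - (LinearMap.id : L →ₗ[K] L)) z = σ z - z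
          from fun z => by simp]
        simp only [map_add, map_mul, map_sub, AlgEquiv.commutes, hσσ, hcp]
        have hMbc : algebraMap K L b * algebraMap K L (b⁻¹ * c) = algebraMap K L c := by
          rw [← map_mul, ← mul_assoc, mul_inv_cancel₀ hb, one_mul]
        rw [Algebra.linearMap_apply]
        linear_combination (algebraMap K L b) * hNθ + hMbc
          + (algebraMap K L a) * (θ - σ θ) * htwo
end

section
/- Let k be a field of characteristic 2 and let m ≤ M be positive odd integers with M − m even. Write p = t^{−m}·∑_{i≥0} p_i t^i, q = t^{−M}·∑_{i≥0} q_i t^i, β = t^{−(M−m)/2}·∑_{i≥0} b_i t^i in k((t)) with p_0 ≠ 0, q_0 ≠ 0, b_0 ≠ 0, and let α = t^{(−M+1)/2}·∑_{i≥0} a_i t^i ∈ k((t)). If ordₜ(q + β²p + α² − α) ≥ −M + (m+1)/2, then for every integer j with 0 ≤ j ≤ ⌊(2m+3)/4⌋ − ⌊(m+3)/4⌋ − 1 one has a_j² = q_{2j+1} + ∑_{i₁+i₂=j} p_{2i₁+1}·b_{i₂}², where the sum runs over pairs of nonnegative integers i₁, i₂ with i₁ + i₂ = j. -/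
/-!
Compare the coefficients of `t^(-M + 2j + 1)` in `q + β²p + α² - α`, which vanish by the
bound on `j`. In characteristic 2 the cross terms of a square cancel in pairs, so `β²` only has
coefficients `b_i²` at even offsets from `-(M - m)`, and `α²` has the coefficient `a_j²` at
`-M + 2j + 1 = 2 · ((-M + 1)/2 + j)`; that exponent lies below the order of `α`, so `α` itself
contributes nothing there.
-/

open Finset

theorem CharTwo.sum_mul_swap_eq_zero {α R : Type*} [CommSemiring R] [CharP R 2]
    (c : α → R) {T : Finset (α × α)} (hswap : ∀ x ∈ T, x.swap ∈ T)
    (hdiag : ∀ x ∈ T, x.1 ≠ x.2) : ∑ x ∈ T, c x.1 * c x.2 = 0 := by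
  refine sum_involution (fun x _ => x.swap) (fun x _ => ?_) (fun x hx _ => ?_)
    (fun x hx => hswap x hx) (fun x _ => x.swap_swap)
  · rw [Prod.fst_swap, Prod.snd_swap, mul_comm (c x.2), CharTwo.add_self_eq_zero]
  · exact fun h => hdiag x hx (congrArg Prod.fst h).symm

namespace HahnSeries

variable {Γ R : Type*} [AddCommMonoid Γ] [LinearOrder Γ] [IsOrderedCancelAddMonoid Γ]
  [CommSemiring R] [CharP R 2]

theorem coeff_sq_eq_zero_of_ne_add_self (f : HahnSeries Γ R) {g : Γ}
    (hg : ∀ a, a + a ≠ g) : (f ^ 2).coeff g = 0 := by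
  rw [sq, coeff_mul]
  refine CharTwo.sum_mul_swap_eq_zero _ (fun x hx => swap_mem_antidiagonal.2 hx)
    (fun x hx hx12 => hg x.1 ?_)
  rw [← (Finset.mem_antidiagonal.1 hx).2.2, ← hx12]

theorem coeff_sq_add_self (f : HahnSeries Γ R) (a : Γ) :
    (f ^ 2).coeff (a + a) = f.coeff a ^ 2 := by
  rw [sq, coeff_mul]
  set T := Finset.antidiagonal f.isPWO_support f.isPWO_support (a + a)
  have hoff : ∑ x ∈ T.erase (a, a), f.coeff x.1 * f.coeff x.2 = 0 := by
    refine CharTwo.sum_mul_swap_eq_zero _ (fun x hx => ?_) (fun x hx hx12 => ?_) <;>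
      obtain ⟨hne, hx⟩ := mem_erase.1 hx
    · refine mem_erase.2 ⟨fun h => hne ?_, swap_mem_antidiagonal.2 hx⟩
      rw [← x.swap_swap, h, Prod.swap_prod_mk]
    · have hsum := (Finset.mem_antidiagonal.1 hx).2.2
      rw [← hx12] at hsum
      have h1 : x.1 = a := (strictMono_id.add strictMono_id).injective hsum
      exact hne (Prod.ext h1 (hx12 ▸ h1))
  by_cases hmem : (a, a) ∈ T
  · rw [← add_sum_erase _ _ hmem, hoff, add_zero, sq]
  · have ha : f.coeff a = 0 := by
      by_contra ha
      exact hmem (Finset.mem_antidiagonal.2 ⟨ha, ha, rfl⟩)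
    rw [← erase_eq_of_notMem hmem, hoff, ha, zero_pow two_ne_zero]

end HahnSeries

theorem LaurentSeries.coeff_mul_eq_sum_antidiagonal {R : Type*} [Semiring R]
    {f g : LaurentSeries R} {A B : ℤ} (hf : (A : WithTop ℤ) ≤ f.orderTop)
    (hg : (B : WithTop ℤ) ≤ g.orderTop) (d : ℕ) :
    (f * g).coeff (A + B + d) =
      ∑ x ∈ antidiagonal d, f.coeff (A + x.1) * g.coeff (B + x.2) := by
  have hlow : ∀ {h : LaurentSeries R} {C n : ℤ}, (C : WithTop ℤ) ≤ h.orderTop →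
      h.coeff n ≠ 0 → C ≤ n := fun hC hn =>
    WithTop.coe_le_coe.1 (hC.trans (HahnSeries.orderTop_le_of_coeff_ne_zero hn))
  rw [HahnSeries.coeff_mul]
  symm
  refine sum_bij_ne_zero (fun x _ _ => (A + x.1, B + x.2)) (fun x hx hne => ?_)
    (fun x _ _ y _ _ hxy => ?_) (fun y hy hne => ?_) (fun _ _ _ => rfl)
  · refine Finset.mem_antidiagonal.2 ⟨left_ne_zero_of_mul hne, right_ne_zero_of_mul hne, ?_⟩
    have := HasAntidiagonal.mem_antidiagonal.1 hx
    simp only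
    omega
  · simp only [Prod.mk.injEq, add_right_inj, Nat.cast_inj] at hxy
    exact Prod.ext hxy.1 hxy.2
  · obtain ⟨-, -, hsum⟩ := Finset.mem_antidiagonal.1 hy
    have h1 := hlow hf (left_ne_zero_of_mul hne)
    have h2 := hlow hg (right_ne_zero_of_mul hne)
    refine ⟨((y.1 - A).toNat, (y.2 - B).toNat),
      HasAntidiagonal.mem_antidiagonal.2 ?_, ?_, ?_⟩
    · simp only
      omega
    · simpa [Int.toNat_of_nonneg (sub_nonneg.2 h1), Int.toNat_of_nonneg (sub_nonneg.2 h2)]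
        using hne
    · simp only [Prod.ext_iff]
      omega

theorem Finset.Nat.sum_antidiagonal_two_mul_add_one {M : Type*} [AddCommMonoid M]
    (f : ℕ × ℕ → M) (hf : ∀ i l, f (2 * i + 1, l) = 0) (n : ℕ) :
    ∑ x ∈ antidiagonal (2 * n + 1), f x = ∑ x ∈ antidiagonal n, f (2 * x.1, 2 * x.2 + 1) := by
  symm
  refine sum_bij_ne_zero (fun x _ _ => (2 * x.1, 2 * x.2 + 1)) (fun x hx _ => ?_)
    (fun x _ _ y _ _ hxy => ?_) (fun y hy hne => ?_) (fun _ _ _ => rfl)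
  · rw [HasAntidiagonal.mem_antidiagonal] at hx ⊢
    omega
  · simp only [Prod.mk.injEq] at hxy
    exact Prod.ext (by omega) (by omega)
  · rw [HasAntidiagonal.mem_antidiagonal] at hy
    obtain ⟨i, hi⟩ : Even y.1 := by
      refine Nat.not_odd_iff_even.1 fun ⟨i, hi⟩ => hne ?_
      rw [← hf i y.2, ← hi]
    have hy' : (2 * i, 2 * (n - i) + 1) = y := Prod.ext (by simp only; omega) (by simp only; omega)
    exact ⟨(i, n - i), HasAntidiagonal.mem_antidiagonal.2 (by omega), by rwa [hy'], hy'⟩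

theorem LaurentSeries.coeff_sq_mul_at_odd_offset {R : Type*} [CommSemiring R] [CharP R 2]
    {f g : LaurentSeries R} {A B : ℤ} (hf : (A : WithTop ℤ) ≤ f.orderTop)
    (hg : (B : WithTop ℤ) ≤ g.orderTop) (n : ℕ) :
    (f ^ 2 * g).coeff (A + A + B + (2 * n + 1)) = ∑ i ∈ range (n + 1),
      g.coeff (B + (2 * i + 1)) * f.coeff (A + ((n : ℤ) - i)) ^ 2 := by
  have hf2 : ((A + A : ℤ) : WithTop ℤ) ≤ (f ^ 2).orderTop := by
    refine le_trans ?_ (HahnSeries.orderTop_nsmul_le_orderTop_pow (n := 2))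
    rw [two_nsmul, WithTop.coe_add]
    exact add_le_add hf hf
  rw [show A + A + B + (2 * n + 1) = (A + A) + B + ((2 * n + 1 : ℕ) : ℤ) by push_cast; ring,
    coeff_mul_eq_sum_antidiagonal hf2 hg, Finset.Nat.sum_antidiagonal_two_mul_add_one,
    ← Finset.Nat.sum_antidiagonal_swap, Finset.Nat.sum_antidiagonal_eq_sum_range_succ_mk]
  · refine sum_congr rfl fun i hi => ?_
    have hin := mem_range_succ_iff.1 hi
    dsimp only [Prod.swap_prod_mk]
    rw [mul_comm, show A + A + ((2 * (n - i) : ℕ) : ℤ) = (A + (n - i)) + (A + (n - i)) by omega,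
      HahnSeries.coeff_sq_add_self]
    push_cast
    rfl
  · intro i l
    rw [HahnSeries.coeff_sq_eq_zero_of_ne_add_self _ fun a => by omega, zero_mul]

theorem laurent_odd_coefficient_relations_general
    (k : Type*) [Field k] (hchar : CharP k 2)
    (m M : ℤ) (hmM : m ≤ M) (hModd : Odd M)
    (heven : Even (M - m))
    (p q β α : LaurentSeries k)
    (hp : ∀ n : ℤ, n < -m → p.coeff n = 0)
    (hβ : ∀ n : ℤ, n < -((M - m) / 2) → β.coeff n = 0)
    (hα : ∀ n : ℤ, n < (-M + 1) / 2 → α.coeff n = 0)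
    (hyp : ∀ n : ℤ, n < -M + (m + 1) / 2 → (q + β ^ 2 * p + α ^ 2 - α).coeff n = 0) :
    ∀ j : ℕ, (j : ℤ) ≤ (2 * m + 3) / 4 - (m + 3) / 4 - 1 →
      (α.coeff ((-M + 1) / 2 + j)) ^ 2 =
        q.coeff (-M + (2 * j + 1)) +
          ∑ i ∈ Finset.range (j + 1),
            p.coeff (-m + (2 * i + 1)) * (β.coeff (-((M - m) / 2) + ((j : ℤ) - i))) ^ 2 := by
  intro j hj
  have hModd' := Int.odd_iff.1 hModd
  have heven' := Int.even_iff.1 heven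
  set A := (-M + 1) / 2
  set B := -((M - m) / 2)
  have hαsq : (α ^ 2).coeff (-M + (2 * j + 1)) = α.coeff (A + j) ^ 2 := by
    rw [show -M + (2 * j + 1) = (A + j) + (A + j) by omega]
    exact HahnSeries.coeff_sq_add_self α _
  have hβsqp : (β ^ 2 * p).coeff (-M + (2 * j + 1)) = ∑ i ∈ Finset.range (j + 1),
      p.coeff (-m + (2 * i + 1)) * (β.coeff (B + ((j : ℤ) - i))) ^ 2 := by
    rw [show -M + (2 * j + 1) = B + B + -m + (2 * j + 1) by omega]
    exact LaurentSeries.coeff_sq_mul_at_odd_offset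
      (HahnSeries.le_orderTop_iff_forall.2 fun n hn => hβ n (by exact_mod_cast hn))
      (HahnSeries.le_orderTop_iff_forall.2 fun n hn => hp n (by exact_mod_cast hn)) j
  have key := hyp (-M + (2 * j + 1)) (by omega)
  rw [HahnSeries.coeff_sub, HahnSeries.coeff_add, HahnSeries.coeff_add, hα _ (by omega), sub_zero,
    hαsq, hβsqp, CharTwo.add_eq_zero] at key
  exact key.symm

/-- With `p = t^{−m}·∑ pᵢtⁱ`, `q = t^{−M}·∑ qᵢtⁱ`,
`β = t^{−(M−m)/2}·∑ bᵢtⁱ` (leading coefficients nonzero),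
`α = t^{(−M+1)/2}·∑ aᵢtⁱ`, and `ordₜ(q + β²p + α² − α) ≥ −M + (m+1)/2`, one has, for all
`0 ≤ j ≤ ⌊(2m+3)/4⌋ − ⌊(m+3)/4⌋ − 1`:
`a_j² = q_{2j+1} + ∑_{i₁+i₂=j} p_{2i₁+1}·b_{i₂}²`.
(Here `pᵢ = p.coeff (−m + i)`, `qᵢ = q.coeff (−M + i)`, `bᵢ = β.coeff (−(M−m)/2 + i)`,
`aᵢ = α.coeff ((−M+1)/2 + i)`.) -/
theorem laurent_odd_coefficient_relations
    (k : Type*) [Field k] (hchar : CharP k 2)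
    (m M : ℤ) (hm : 0 < m) (hmM : m ≤ M) (hmodd : Odd m) (hModd : Odd M)
    (heven : Even (M - m))
    (p q β α : LaurentSeries k)
    (hp0 : p.coeff (-m) ≠ 0) (hp : ∀ n : ℤ, n < -m → p.coeff n = 0)
    (hq0 : q.coeff (-M) ≠ 0) (hq : ∀ n : ℤ, n < -M → q.coeff n = 0)
    (hβ0 : β.coeff (-((M - m) / 2)) ≠ 0)
    (hβ : ∀ n : ℤ, n < -((M - m) / 2) → β.coeff n = 0)
    (hα : ∀ n : ℤ, n < (-M + 1) / 2 → α.coeff n = 0)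
    (hyp : ∀ n : ℤ, n < -M + (m + 1) / 2 → (q + β ^ 2 * p + α ^ 2 - α).coeff n = 0) :
    ∀ j : ℕ, (j : ℤ) ≤ (2 * m + 3) / 4 - (m + 3) / 4 - 1 →
      (α.coeff ((-M + 1) / 2 + j)) ^ 2 =
        q.coeff (-M + (2 * j + 1)) +
          ∑ i ∈ Finset.range (j + 1),
            p.coeff (-m + (2 * i + 1)) * (β.coeff (-((M - m) / 2) + ((j : ℤ) - i))) ^ 2 :=
  laurent_odd_coefficient_relations_general k hchar m M hmM hModd heven p q β α hp hβ hα hyp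
end

section
/- Let k be a field of characteristic 2 and let m ≤ M be positive odd integers with M − m even. Write p = t^{−m}·∑_{i≥0} p_i t^i, q = t^{−M}·∑_{i≥0} q_i t^i, β = t^{−(M−m)/2}·∑_{i≥0} b_i t^i in k((t)) with p_0 ≠ 0, q_0 ≠ 0, b_0 ≠ 0, and let α = t^{(−M+1)/2}·∑_{i≥0} a_i t^i ∈ k((t)). Assume ordₜ(q + β²p + α² − α) ≥ −M + (m+1)/2. Set B := ⌊(2m+3)/4⌋ − ⌊(m+3)/4⌋, and define the truncations ᾱ := t^{(−M+1)/2}·∑_{i=0}^{B−1} a_i t^i and, for an integer j ≥ 0, β(j) := t^{−(M−m)/2}·∑_{i=0}^{j} b_i t^i. Then for every integer j with 0 ≤ j ≤ ⌊m/4⌋ − 1 one has ordₜ(q + β(j)²p + ᾱ² − ᾱ) ≥ −M + 2j + 2. -/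
/-! In characteristic 2 both `x ↦ x²p` and `x ↦ x² − x` are additive, so replacing `β` and `α`
by their truncations changes `q + β²p + α² − α` by `(β(j) − β)²p + (ᾱ − α)² − (ᾱ − α)`.
The truncation errors have order at least `−(M−m)/2 + j + 1` and `(−M+1)/2 + B`, and since
`B ≥ ⌊m/4⌋ ≥ j + 1` each of these terms has order `≥ −M + 2j + 2`; the untruncated expression
already has that order because `2j + 2 ≤ (m+1)/2`. -/

open Finset

namespace HahnSeries

instance instCharP {Γ R : Type*} [AddCommMonoid Γ] [PartialOrder Γ] [IsOrderedCancelAddMonoid Γ]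
    [Semiring R] (p : ℕ) [CharP R p] : CharP (HahnSeries Γ R) p :=
  charP_of_injective_ringHom C_injective p

section Order

variable {Γ R : Type*} [LinearOrder Γ]

theorem coe_le_orderTop_iff [Zero R] {x : HahnSeries Γ R} {c : Γ} :
    (c : WithTop Γ) ≤ x.orderTop ↔ ∀ n < c, x.coeff n = 0 := by
  simp [le_orderTop_iff_forall]

theorem coe_add_le_orderTop_mul [AddCommMonoid Γ] [IsOrderedCancelAddMonoid Γ]
    [NonUnitalNonAssocSemiring R]
    {x y : HahnSeries Γ R} {a b : Γ} (ha : (a : WithTop Γ) ≤ x.orderTop)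
    (hb : (b : WithTop Γ) ≤ y.orderTop) : ((a + b : Γ) : WithTop Γ) ≤ (x * y).orderTop :=
  WithTop.coe_add a b ▸ (add_le_add ha hb).trans orderTop_add_le_mul

theorem le_orderTop_add [AddMonoid R] {x y : HahnSeries Γ R} {c : WithTop Γ}
    (hx : c ≤ x.orderTop) (hy : c ≤ y.orderTop) : c ≤ (x + y).orderTop :=
  (le_min hx hy).trans min_orderTop_le_orderTop_add

theorem le_orderTop_sub [AddGroup R] {x y : HahnSeries Γ R} {c : WithTop Γ}
    (hx : c ≤ x.orderTop) (hy : c ≤ y.orderTop) : c ≤ (x - y).orderTop :=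
  (le_min hx hy).trans min_orderTop_le_orderTop_sub

end Order

theorem coe_add_le_orderTop_sum_single_sub {R : Type*} [AddCommGroup R] {x : HahnSeries ℤ R}
    {s : ℤ} (hx : (s : WithTop ℤ) ≤ x.orderTop) (N : ℕ) :
    ((s + N : ℤ) : WithTop ℤ) ≤
      ((∑ i ∈ range N, single (s + i) (x.coeff (s + i))) - x).orderTop := by
  rw [coe_le_orderTop_iff] at hx ⊢
  intro n hn
  rw [coeff_sub, coeff_sum, sub_eq_zero]
  by_cases hns : n < s
  · rw [hx n hns]
    exact sum_eq_zero fun i _ => coeff_single_of_ne (by omega)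
  · have hn_eq : n = s + (n - s).toNat := by omega
    rw [sum_eq_single_of_mem (n - s).toNat (mem_range.2 (by omega)) fun i _ hi =>
      coeff_single_of_ne (by omega), ← hn_eq, coeff_single_same]

end HahnSeries

open HahnSeries

theorem laurent_truncation_order_bound_general
    (k : Type*) [Field k] (hchar : CharP k 2)
    (m M : ℤ) (hmM : m ≤ M)
    (p q β α : LaurentSeries k)
    (hp : ∀ n : ℤ, n < -m → p.coeff n = 0)
    (hβ : ∀ n : ℤ, n < -((M - m) / 2) → β.coeff n = 0)
    (hα : ∀ n : ℤ, n < (-M + 1) / 2 → α.coeff n = 0)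
    (hyp : ∀ n : ℤ, n < -M + (m + 1) / 2 → (q + β ^ 2 * p + α ^ 2 - α).coeff n = 0)
    (αbar : LaurentSeries k)
    (hαbar : αbar =
      ∑ i ∈ Finset.range ((( (2 * m + 3) / 4 - (m + 3) / 4 : ℤ)).toNat),
        HahnSeries.single ((-M + 1) / 2 + (i : ℤ)) (α.coeff ((-M + 1) / 2 + (i : ℤ))))
    (βtr : ℕ → LaurentSeries k)
    (hβtr : ∀ j : ℕ, βtr j =
      ∑ i ∈ Finset.range (j + 1),
        HahnSeries.single (-((M - m) / 2) + (i : ℤ)) (β.coeff (-((M - m) / 2) + (i : ℤ)))) :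
    ∀ j : ℕ, (j : ℤ) ≤ m / 4 - 1 →
      ∀ n : ℤ, n < -M + 2 * (j : ℤ) + 2 →
        (q + (βtr j) ^ 2 * p + αbar ^ 2 - αbar).coeff n = 0 := by
  have := hchar
  intro j hj n hn
  set B := ((2 * m + 3) / 4 - (m + 3) / 4 : ℤ).toNat
  have hsplit : q + βtr j ^ 2 * p + αbar ^ 2 - αbar = (q + β ^ 2 * p + α ^ 2 - α)
      + ((βtr j - β) ^ 2 * p + ((αbar - α) ^ 2 - (αbar - α))) := by
    rw [sub_pow_char, sub_pow_char]; ring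
  have hres : ((-M + 2 * j + 2 : ℤ) : WithTop ℤ) ≤ (q + β ^ 2 * p + α ^ 2 - α).orderTop :=
    coe_le_orderTop_iff.2 fun n hn => hyp n (by omega)
  have hβd : ((-((M - m) / 2) + (j + 1 : ℕ) : ℤ) : WithTop ℤ) ≤ (βtr j - β).orderTop := by
    rw [hβtr]; exact coe_add_le_orderTop_sum_single_sub (coe_le_orderTop_iff.2 hβ) _
  have hαd : (((-M + 1) / 2 + B : ℤ) : WithTop ℤ) ≤ (αbar - α).orderTop := by
    rw [hαbar]; exact coe_add_le_orderTop_sum_single_sub (coe_le_orderTop_iff.2 hα) _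
  have hβp := coe_add_le_orderTop_mul (sq (βtr j - β) ▸ coe_add_le_orderTop_mul hβd hβd)
    (coe_le_orderTop_iff.2 hp)
  have hαsq := sq (αbar - α) ▸ coe_add_le_orderTop_mul hαd hαd
  refine coeff_eq_zero_of_lt_orderTop (lt_of_lt_of_le (WithTop.coe_lt_coe.2 hn) ?_)
  rw [hsplit]
  refine le_orderTop_add hres (le_orderTop_add ?_ (le_orderTop_sub ?_ ?_))
  · exact (WithTop.coe_le_coe.2 (by omega)).trans hβp
  · exact (WithTop.coe_le_coe.2 (by omega)).trans hαsq
  · exact (WithTop.coe_le_coe.2 (by omega)).trans hαd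

/-- With notation as in Statements 6/7 and
`B := ⌊(2m+3)/4⌋ − ⌊(m+3)/4⌋`, define the truncations
`ᾱ := t^{(−M+1)/2}·∑_{i<B} aᵢtⁱ` and `β(j) := t^{−(M−m)/2}·∑_{i≤j} bᵢtⁱ`.
Then for every `0 ≤ j ≤ ⌊m/4⌋ − 1` one has
`ordₜ(q + β(j)²p + ᾱ² − ᾱ) ≥ −M + 2j + 2`. -/
theorem laurent_truncation_order_bound
    (k : Type*) [Field k] (hchar : CharP k 2)
    (m M : ℤ) (hm : 0 < m) (hmM : m ≤ M) (hmodd : Odd m) (hModd : Odd M)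
    (heven : Even (M - m))
    (p q β α : LaurentSeries k)
    (hp0 : p.coeff (-m) ≠ 0) (hp : ∀ n : ℤ, n < -m → p.coeff n = 0)
    (hq0 : q.coeff (-M) ≠ 0) (hq : ∀ n : ℤ, n < -M → q.coeff n = 0)
    (hβ0 : β.coeff (-((M - m) / 2)) ≠ 0)
    (hβ : ∀ n : ℤ, n < -((M - m) / 2) → β.coeff n = 0)
    (hα : ∀ n : ℤ, n < (-M + 1) / 2 → α.coeff n = 0)
    (hyp : ∀ n : ℤ, n < -M + (m + 1) / 2 → (q + β ^ 2 * p + α ^ 2 - α).coeff n = 0)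
    (αbar : LaurentSeries k)
    (hαbar : αbar =
      ∑ i ∈ Finset.range ((( (2 * m + 3) / 4 - (m + 3) / 4 : ℤ)).toNat),
        HahnSeries.single ((-M + 1) / 2 + (i : ℤ)) (α.coeff ((-M + 1) / 2 + (i : ℤ))))
    (βtr : ℕ → LaurentSeries k)
    (hβtr : ∀ j : ℕ, βtr j =
      ∑ i ∈ Finset.range (j + 1),
        HahnSeries.single (-((M - m) / 2) + (i : ℤ)) (β.coeff (-((M - m) / 2) + (i : ℤ)))) :
    ∀ j : ℕ, (j : ℤ) ≤ m / 4 - 1 →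
      ∀ n : ℤ, n < -M + 2 * (j : ℤ) + 2 →
        (q + (βtr j) ^ 2 * p + αbar ^ 2 - αbar).coeff n = 0 :=
  laurent_truncation_order_bound_general k hchar m M hmM p q β α hp hβ hα hyp αbar hαbar βtr hβtr
end

section
/- Let k be a field of characteristic 2, n ≥ 1, and λ ∈ k with λ ≠ 0. Consider the two representations of the Klein four group G = ⟨σ, τ⟩ on k^{2n}: in the first, σ acts as I_{2n} + E(J_n(λ)) and τ acts as I_{2n} + E(I_n); in the second, σ acts as I_{2n} + E(I_n) and τ acts as I_{2n} + E(J_n(λ⁻¹)). Then these two representations are isomorphic; that is, there exists an invertible 2n × 2n matrix P over k such that P·(I_{2n} + E(J_n(λ))) = (I_{2n} + E(I_n))·P and P·(I_{2n} + E(I_n)) = (I_{2n} + E(J_n(λ⁻¹)))·P. -/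
/-- The `n × n` upper-triangular Jordan block with eigenvalue `lam`. -/
def jordanBlock (k : Type*) [Zero k] [One k] (n : ℕ) (lam : k) :
    Matrix (Fin n) (Fin n) k :=
  Matrix.of fun i j => if (j : ℕ) = (i : ℕ) then lam
    else if (j : ℕ) = (i : ℕ) + 1 then 1 else 0

/-- The `2n × 2n` block matrix `[[0, X], [0, 0]]`. -/
def eBlock (k : Type*) [Zero k] (n : ℕ) (X : Matrix (Fin n) (Fin n) k) :
    Matrix (Fin n ⊕ Fin n) (Fin n ⊕ Fin n) k :=
  Matrix.fromBlocks 0 X 0 0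

/-!
Conjugation by `D = diag(μ^i)` turns `J(μ)` into `μ • J(1)`, so for `μν = 1` an invertible `A` with
`J(μ) A J(ν) = A` comes from an invertible `B` with `J(1) B J(1) = B`, i.e. a conjugation of the
unipotent block `J(1)` to its inverse; `B i j = (-1)^j C(j, i)` is one, by Pascal's rule. With
`μ = λ⁻¹`, `ν = λ`, the block diagonal `P = diag(A, A J(λ))` intertwines the two representations.
-/

open Matrix

section Semiring

variable {R : Type*} [Semiring R] {n : ℕ}

theorem jordanBlock_zero_apply (i j : Fin n) :
    jordanBlock R n 0 i j = if (j : ℕ) = i + 1 then 1 else 0 := by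
  simp only [jordanBlock, of_apply]
  split_ifs <;> first | rfl | omega

theorem jordanBlock_one_eq_one_add : jordanBlock R n 1 = 1 + jordanBlock R n 0 := by
  ext i j
  simp only [jordanBlock, of_apply, Matrix.add_apply, one_apply, Fin.ext_iff]
  split_ifs <;> first | omega | simp

theorem jordanBlock_zero_mul_of (f : ℕ → ℕ → R) (hf : ∀ j < n, f n j = 0) :
    jordanBlock R n 0 * of (fun i j : Fin n => f i j) = of fun i j : Fin n => f (i + 1) j := by
  ext i j
  simp only [mul_apply, of_apply, jordanBlock_zero_apply, boole_mul]
  rw [Fin.sum_univ_eq_sum_range (fun x => if x = (i : ℕ) + 1 then f x j else 0)]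
  simp only [Finset.sum_ite_eq', Finset.mem_range]
  split_ifs
  · rfl
  · rw [show (i : ℕ) + 1 = n by omega, hf j j.isLt]

theorem of_mul_jordanBlock_zero (f : ℕ → ℕ → R) :
    of (fun i j : Fin n => f i j) * jordanBlock R n 0 =
      of fun i j : Fin n => if (j : ℕ) = 0 then 0 else f i (j - 1) := by
  ext i j
  simp only [mul_apply, of_apply, jordanBlock_zero_apply, mul_boole]
  rw [Fin.sum_univ_eq_sum_range (fun x => if (j : ℕ) = x + 1 then f i x else 0)]
  obtain ⟨j, hj⟩ := j
  cases j with
  | zero => simp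
  | succ j =>
    simp only [add_left_inj, Finset.sum_ite_eq, Finset.mem_range, Nat.add_one_ne_zero,
      if_false, Nat.add_sub_cancel]
    exact if_pos (by omega)

end Semiring

section CommRing

variable {R : Type*} [CommRing R] {n : ℕ}

def signedPascal (R : Type*) [CommRing R] (n : ℕ) : Matrix (Fin n) (Fin n) R :=
  of fun i j => (-1) ^ (j : ℕ) * ((j : ℕ).choose i : R)

theorem jordanBlock_one_mul_signedPascal_mul :
    jordanBlock R n 1 * signedPascal R n * jordanBlock R n 1 = signedPascal R n := by
  let f : ℕ → ℕ → R := fun i j => (-1) ^ j * (j.choose i : R)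
  have hf : ∀ i, ∀ j < i, f i j = 0 := fun i j h => by simp [f, Nat.choose_eq_zero_of_lt h]
  have hB : signedPascal R n = of fun i j : Fin n => f i j := rfl
  rw [jordanBlock_one_eq_one_add, hB, add_mul, one_mul, mul_add, mul_one, add_mul,
    jordanBlock_zero_mul_of f (hf n), of_mul_jordanBlock_zero f,
    of_mul_jordanBlock_zero fun i j => f (i + 1) j]
  ext i j
  simp only [Matrix.add_apply, of_apply]
  rcases j with ⟨_ | j, _⟩
  · simp [hf]
  · simp only [Nat.add_one_ne_zero, if_false, Nat.add_sub_cancel, f, Nat.choose_succ_succ]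
    push_cast
    ring

theorem isUnit_signedPascal : IsUnit (signedPascal R n) := by
  rw [isUnit_iff_isUnit_det, det_of_isUpperTriangular]
  · simp [signedPascal, (isUnit_one.neg).pow]
  · intro i j hij
    simp [signedPascal, Nat.choose_eq_zero_of_lt (show (j : ℕ) < i from hij)]

theorem isUnit_jordanBlock {μ : R} (hμ : IsUnit μ) : IsUnit (jordanBlock R n μ) := by
  rw [isUnit_iff_isUnit_det, det_of_isUpperTriangular]
  · simp [jordanBlock, hμ.pow]
  · intro i j hij
    simp only [jordanBlock, of_apply]
    split_ifs <;> first | rfl | (have : (j : ℕ) < i := hij; omega)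

theorem jordanBlock_mul_diagonal_pow (μ : R) :
    jordanBlock R n μ * diagonal (fun i : Fin n => μ ^ (i : ℕ)) =
      μ • (diagonal (fun i : Fin n => μ ^ (i : ℕ)) * jordanBlock R n 1) := by
  ext i j
  simp only [mul_diagonal, diagonal_mul, Matrix.smul_apply, smul_eq_mul, jordanBlock, of_apply]
  split_ifs with h₁ h₂
  · rw [h₁]; ring
  · rw [h₂]; ring
  · ring

theorem diagonal_pow_mul_jordanBlock {μ ν : R} (h : μ * ν = 1) :
    diagonal (fun i : Fin n => μ ^ (i : ℕ)) * jordanBlock R n ν =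
      ν • (jordanBlock R n 1 * diagonal (fun i : Fin n => μ ^ (i : ℕ))) := by
  ext i j
  simp only [mul_diagonal, diagonal_mul, Matrix.smul_apply, smul_eq_mul, jordanBlock, of_apply]
  split_ifs with h₁ h₂
  · rw [h₁]; ring
  · rw [h₂]; linear_combination -(μ ^ (i : ℕ)) * h
  · ring

theorem exists_isUnit_jordanBlock_mul_mul_jordanBlock {μ ν : R} (h : μ * ν = 1) :
    ∃ A : Matrix (Fin n) (Fin n) R, IsUnit A ∧ jordanBlock R n μ * A * jordanBlock R n ν = A := by
  set D := diagonal fun i : Fin n => μ ^ (i : ℕ) with hD_def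
  have hD : IsUnit D := isUnit_diagonal.mpr (Pi.isUnit_iff.mpr fun i =>
    (IsUnit.of_mul_eq_one ν h).pow _)
  refine ⟨D * signedPascal R n * D, (hD.mul isUnit_signedPascal).mul hD, ?_⟩
  calc jordanBlock R n μ * (D * signedPascal R n * D) * jordanBlock R n ν
      = (jordanBlock R n μ * D) * signedPascal R n * (D * jordanBlock R n ν) := by
        simp only [mul_assoc]
    _ = (μ * ν) • (D * (jordanBlock R n 1 * signedPascal R n * jordanBlock R n 1) * D) := by
        rw [jordanBlock_mul_diagonal_pow, diagonal_pow_mul_jordanBlock h]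
        rw [smul_mul_assoc, smul_mul_assoc, mul_smul_comm, smul_smul]
        simp only [mul_assoc, hD_def]
    _ = D * signedPascal R n * D := by
        rw [h, one_smul, jordanBlock_one_mul_signedPascal_mul]

end CommRing

theorem one_add_eBlock {R : Type*} [Semiring R] {n : ℕ} (X : Matrix (Fin n) (Fin n) R) :
    1 + eBlock R n X = fromBlocks 1 X 0 1 := by
  rw [eBlock, ← fromBlocks_one, fromBlocks_add]
  simp

theorem fromBlocks_mul_one_add_eBlock {R : Type*} [Semiring R] {n : ℕ}
    {A B X Y : Matrix (Fin n) (Fin n) R} (h : A * X = Y * B) :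
    fromBlocks A 0 0 B * (1 + eBlock R n X) = (1 + eBlock R n Y) * fromBlocks A 0 0 B := by
  simp [one_add_eBlock, fromBlocks_multiply, h]

theorem klein_four_rep_swap_iso_general
    (k : Type*) [Field k] (n : ℕ)
    (lam : k) (hlam : lam ≠ 0) :
    ∃ P : Matrix (Fin n ⊕ Fin n) (Fin n ⊕ Fin n) k, IsUnit P ∧
      P * (1 + eBlock k n (jordanBlock k n lam)) = (1 + eBlock k n 1) * P ∧
      P * (1 + eBlock k n 1) = (1 + eBlock k n (jordanBlock k n lam⁻¹)) * P := by
  obtain ⟨A, hA, hAJ⟩ :=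
    exists_isUnit_jordanBlock_mul_mul_jordanBlock (n := n) (inv_mul_cancel₀ hlam)
  refine ⟨fromBlocks A 0 0 (A * jordanBlock k n lam), ?_, ?_, ?_⟩
  · exact isUnit_fromBlocks_zero₂₁.mpr
      ⟨hA, hA.mul (isUnit_jordanBlock (isUnit_iff_ne_zero.mpr hlam))⟩
  · exact fromBlocks_mul_one_add_eBlock (one_mul _).symm
  · exact fromBlocks_mul_one_add_eBlock (by rw [mul_one, ← mul_assoc, hAJ])

/-- Over a field `k` of characteristic 2 with `λ ≠ 0`, the Klein four
representation on `k^{2n}` in which `σ` acts as `I + E(Jₙ(λ))` and `τ` as `I + E(Iₙ)` is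
isomorphic to the one in which `σ` acts as `I + E(Iₙ)` and `τ` as `I + E(Jₙ(λ⁻¹))`:
there is an invertible `P` intertwining the two actions. -/
theorem klein_four_rep_swap_iso
    (k : Type*) [Field k] (hchar : CharP k 2) (n : ℕ) (hn : 1 ≤ n)
    (lam : k) (hlam : lam ≠ 0) :
    ∃ P : Matrix (Fin n ⊕ Fin n) (Fin n ⊕ Fin n) k, IsUnit P ∧
      P * (1 + eBlock k n (jordanBlock k n lam)) = (1 + eBlock k n 1) * P ∧
      P * (1 + eBlock k n 1) = (1 + eBlock k n (jordanBlock k n lam⁻¹)) * P :=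
  klein_four_rep_swap_iso_general k n lam hlam
end

section
/- Let k be a field of characteristic 2, n ≥ 1, and λ ∈ k. Consider the representation N_{2n,λ} of the Klein four group G = ⟨σ, τ⟩ on k^{2n}, where σ acts as I_{2n} + E(I_n) and τ acts as I_{2n} + E(J_n(λ)). Write u := E(I_n) (the action of σ − 1) and w := E(J_n(λ)) (the action of τ − 1). Then: (i) u·w = 0 (i.e., (σ−1)(τ−1) acts as zero); (ii) dim_k (ker u ∩ ker w) = n; and (iii) for every (a, b) ∈ k × k with (a, b) ≠ (0, 0), dim_k ker(a·u + b·w) = n + 1 if a = λ·b, and dim_k ker(a·u + b·w) = n otherwise. -/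
open scoped Classical

/-!
Everything reduces to `n × n` matrices: the kernel of `E(X)` is the top half `kⁿ` plus `ker X`
in the bottom half, and `a • E(1) + b • E(Jₙ(λ)) = E(a • 1 + b • Jₙ(λ))`. This matrix is upper
triangular with diagonal `a + bλ`, so it is invertible unless `a + bλ = 0`, i.e. `a = λb` in
characteristic 2; then it is `b • Jₙ(0)`, and the kernel of the shift `Jₙ(0)` is the line
through the first basis vector.
-/

open Matrix

lemma isUpperTriangular_jordanBlock {k : Type*} [Zero k] [One k] {n : ℕ} (lam : k) :
    (jordanBlock k n lam).IsUpperTriangular := by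
  intro i j (hji : (j : ℕ) < i)
  simp only [jordanBlock, of_apply]
  rw [if_neg (by omega), if_neg (by omega)]

section jordanBlock

variable {k : Type*} [Field k] {n : ℕ}

lemma det_smul_one_add_smul_jordanBlock (a b lam : k) :
    (a • 1 + b • jordanBlock k n lam).det = (a + b * lam) ^ n := by
  have hM : (a • 1 + b • jordanBlock k n lam).IsUpperTriangular := fun i j hij => by
    simp [isUpperTriangular_jordanBlock lam hij, one_apply_ne (show j < i from hij).ne']
  rw [det_of_isUpperTriangular hM]
  simp [jordanBlock]

lemma ker_smul_one_add_smul_jordanBlock_eq_bot {a b lam : k} (h : a + b * lam ≠ 0) :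
    LinearMap.ker (a • 1 + b • jordanBlock k n lam).mulVecLin = ⊥ := by
  rw [LinearMap.ker_eq_bot, coe_mulVecLin, mulVec_injective_iff_isUnit, isUnit_iff_isUnit_det,
    det_smul_one_add_smul_jordanBlock]
  exact (Ne.isUnit h).pow n

lemma jordanBlock_eq_smul_one_add (lam : k) :
    jordanBlock k n lam = lam • 1 + jordanBlock k n 0 := by
  ext i j
  by_cases hij : i = j
  · simp [jordanBlock, hij]
  · have : (j : ℕ) ≠ i := fun h => hij (Fin.ext h.symm)
    simp [jordanBlock, hij, this]

lemma jordanBlock_zero_mulVec_apply (y : Fin n → k) (i : Fin n) :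
    (jordanBlock k n 0 *ᵥ y) i = if h : (i : ℕ) + 1 < n then y ⟨i + 1, h⟩ else 0 := by
  rw [mulVec, dotProduct]
  split_ifs with h
  · rw [Finset.sum_eq_single ⟨i + 1, h⟩]
    · simp [jordanBlock]
    · intro j _ hj
      have : (j : ℕ) ≠ i + 1 := fun h' => hj (Fin.ext h')
      simp [jordanBlock, this]
    · simp
  · refine Finset.sum_eq_zero fun j _ => ?_
    have : (j : ℕ) ≠ i + 1 := by omega
    simp [jordanBlock, this]

lemma ker_jordanBlock_zero [NeZero n] :
    LinearMap.ker (jordanBlock k n 0).mulVecLin = k ∙ (Pi.single 0 1 : Fin n → k) := by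
  ext y
  rw [LinearMap.mem_ker, mulVecLin_apply, Submodule.mem_span_singleton]
  constructor
  · intro hy
    refine ⟨y 0, funext fun j => ?_⟩
    rcases eq_or_ne j 0 with rfl | hj
    · simp
    · have hj' : (j : ℕ) ≠ 0 := Fin.val_ne_zero_iff.mpr hj
      have hshift := congrFun hy ⟨j - 1, by omega⟩
      rw [jordanBlock_zero_mulVec_apply, dif_pos (by simp; omega)] at hshift
      simp only [Nat.sub_add_cancel (Nat.one_le_iff_ne_zero.2 hj')] at hshift
      simp [hj, hshift]
  · rintro ⟨c, rfl⟩
    funext i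
    rw [jordanBlock_zero_mulVec_apply]
    split_ifs with h
    · have : (⟨i + 1, h⟩ : Fin n) ≠ 0 :=
        Fin.ne_of_val_ne (by rw [Fin.val_zero]; exact Nat.succ_ne_zero _)
      simp [this]
    · simp

lemma finrank_ker_jordanBlock_zero [NeZero n] :
    Module.finrank k (LinearMap.ker (jordanBlock k n 0).mulVecLin) = 1 := by
  rw [ker_jordanBlock_zero]
  exact finrank_span_singleton (Pi.single_ne_zero_iff.2 one_ne_zero)

lemma finrank_ker_smul_one_add_smul_jordanBlock [NeZero n] {a b : k} (hab : (a, b) ≠ (0, 0))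
    (lam : k) :
    Module.finrank k (LinearMap.ker (a • 1 + b • jordanBlock k n lam).mulVecLin)
      = if a + b * lam = 0 then 1 else 0 := by
  split_ifs with h
  · have hb : b ≠ 0 := by
      rintro rfl
      exact hab (by simpa using h)
    have hM : a • 1 + b • jordanBlock k n lam = b • jordanBlock k n 0 := by
      rw [jordanBlock_eq_smul_one_add lam, smul_add, smul_smul, ← add_assoc, ← add_smul,
        h, zero_smul, zero_add]
    rw [hM, ← Matrix.toLin'_apply', map_smul, LinearMap.ker_smul _ _ hb, Matrix.toLin'_apply',
      finrank_ker_jordanBlock_zero]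
  · rw [ker_smul_one_add_smul_jordanBlock_eq_bot h, finrank_bot]

end jordanBlock

section eBlock

variable {k : Type*} {n : ℕ}

lemma eBlock_mul_eBlock [NonUnitalNonAssocSemiring k] (X Y : Matrix (Fin n) (Fin n) k) :
    eBlock k n X * eBlock k n Y = 0 := by
  simp [eBlock, fromBlocks_multiply]

lemma eBlock_add [AddZeroClass k] (X Y : Matrix (Fin n) (Fin n) k) :
    eBlock k n (X + Y) = eBlock k n X + eBlock k n Y := by
  simp [eBlock, fromBlocks_add]

lemma eBlock_smul [MulZeroClass k] (a : k) (X : Matrix (Fin n) (Fin n) k) :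
    eBlock k n (a • X) = a • eBlock k n X := by
  ext (i | i) (j | j) <;> simp [eBlock]

variable [CommRing k]

lemma mem_ker_eBlock {X : Matrix (Fin n) (Fin n) k} {v : Fin n ⊕ Fin n → k} :
    v ∈ LinearMap.ker (eBlock k n X).mulVecLin ↔ X *ᵥ (v ∘ Sum.inr) = 0 := by
  conv_lhs => rw [← Sum.elim_comp_inl_inr v]
  simp [eBlock, fromBlocks_mulVec, funext_iff]

lemma ker_eBlock_one_le (X : Matrix (Fin n) (Fin n) k) :
    LinearMap.ker (eBlock k n 1).mulVecLin ≤ LinearMap.ker (eBlock k n X).mulVecLin := by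
  intro v hv
  rw [mem_ker_eBlock, one_mulVec] at hv
  rw [mem_ker_eBlock, hv, mulVec_zero]

noncomputable def kerEBlockEquiv (X : Matrix (Fin n) (Fin n) k) :
    LinearMap.ker (eBlock k n X).mulVecLin ≃ₗ[k] (Fin n → k) × LinearMap.ker X.mulVecLin where
  toFun v := (v.1 ∘ Sum.inl, ⟨v.1 ∘ Sum.inr, mem_ker_eBlock.1 v.2⟩)
  map_add' _ _ := rfl
  map_smul' _ _ := rfl
  invFun p := ⟨Sum.elim p.1 p.2.1, mem_ker_eBlock.2 p.2.2⟩
  left_inv v := Subtype.ext (Sum.elim_comp_inl_inr v.1)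
  right_inv _ := rfl

end eBlock

lemma finrank_ker_eBlock {k : Type*} [Field k] {n : ℕ} (X : Matrix (Fin n) (Fin n) k) :
    Module.finrank k (LinearMap.ker (eBlock k n X).mulVecLin)
      = n + Module.finrank k (LinearMap.ker X.mulVecLin) := by
  rw [(kerEBlockEquiv X).finrank_eq, Module.finrank_prod, Module.finrank_fin_fun]

/-- For the Klein four representation `N_{2n,λ}` with `u = E(Iₙ)` the
action of `σ − 1` and `w = E(Jₙ(λ))` the action of `τ − 1`:
(i) `u·w = 0`; (ii) `dim (ker u ∩ ker w) = n`; (iii) for `(a, b) ≠ (0, 0)`,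
`dim ker(a·u + b·w) = n + 1` if `a = λ·b`, and `= n` otherwise. -/
theorem klein_four_N2n_kernel_dims
    (k : Type*) [Field k] (hchar : CharP k 2) (n : ℕ) (hn : 1 ≤ n) (lam : k) :
    (Matrix.mulVecLin (eBlock k n 1)) ∘ₗ
        (Matrix.mulVecLin (eBlock k n (jordanBlock k n lam))) = 0 ∧
    Module.finrank k
        ↥(LinearMap.ker (Matrix.mulVecLin (eBlock k n 1)) ⊓
          LinearMap.ker (Matrix.mulVecLin (eBlock k n (jordanBlock k n lam)))) = n ∧
    (∀ a b : k, (a, b) ≠ (0, 0) →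
      Module.finrank k
          ↥(LinearMap.ker
              (a • Matrix.mulVecLin (eBlock k n 1)
                + b • Matrix.mulVecLin (eBlock k n (jordanBlock k n lam))))
        = if a = lam * b then n + 1 else n) := by
  have : NeZero n := ⟨by omega⟩
  refine ⟨?_, ?_, fun a b hab => ?_⟩
  · rw [← mulVecLin_mul, eBlock_mul_eBlock, mulVecLin_zero]
  · rw [inf_eq_left.2 (ker_eBlock_one_le _), finrank_ker_eBlock, mulVecLin_one, LinearMap.ker_id,
      finrank_bot, add_zero]
  · have hcomb : a • (eBlock k n 1).mulVecLin + b • (eBlock k n (jordanBlock k n lam)).mulVecLin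
        = (eBlock k n (a • 1 + b • jordanBlock k n lam)).mulVecLin := by
      simp only [eBlock_add, eBlock_smul, ← toLin'_apply', map_add, map_smul]
    have hchar2 : a + b * lam = 0 ↔ a = lam * b := by
      rw [add_eq_zero_iff_eq_neg, CharTwo.neg_eq, mul_comm]
    rw [hcomb, finrank_ker_eBlock, finrank_ker_smul_one_add_smul_jordanBlock hab, hchar2]
    split_ifs <;> rfl
end

section
/- Let k be a field, let n ≥ 1 and 1 ≤ δ ≤ n be integers, and let N be an n × n matrix over k such that N_{i,j} = 0 whenever j − i < δ, and N_{i,i+δ} ≠ 0 for all 1 ≤ i ≤ n − δ. Then for every integer i ≥ 0, the rank of N^i equals max(n − i·δ, 0). In particular, N^ℓ = 0 and N^{ℓ−1} ≠ 0, where ℓ is the least integer with ℓ·δ ≥ n. -/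
/-- Let `N` be an `n × n` matrix over a field `k` whose entries vanish
strictly below the `δ`-th superdiagonal (`N_{i,j} = 0` for `j − i < δ`) and whose
entries on the `δ`-th superdiagonal are all nonzero.  Then `rank (Nⁱ) = max(n − iδ, 0)`
for all `i ≥ 0`; in particular `N^ℓ = 0` and `N^{ℓ−1} ≠ 0`, where `ℓ` is the least
integer with `ℓδ ≥ n`. -/
theorem shifted_superdiagonal_rank_powers
    (k : Type*) [Field k] (n δ : ℕ) (hn : 1 ≤ n) (hδ1 : 1 ≤ δ) (hδn : δ ≤ n)
    (N : Matrix (Fin n) (Fin n) k)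
    (hzero : ∀ i j : Fin n, (j : ℕ) < (i : ℕ) + δ → N i j = 0)
    (hdiag : ∀ i j : Fin n, (j : ℕ) = (i : ℕ) + δ → N i j ≠ 0)
    (ℓ : ℕ) (hℓ : IsLeast {l : ℕ | n ≤ l * δ} ℓ) :
    (∀ i : ℕ, ((N ^ i).rank : ℤ) = max ((n : ℤ) - (i : ℤ) * (δ : ℤ)) 0) ∧
    N ^ ℓ = 0 ∧ N ^ (ℓ - 1) ≠ 0 := by
  -- entries of powers vanish strictly below the (m·δ)-th superdiagonal
  have hzeroPow : ∀ m : ℕ, ∀ i j : Fin n, (j : ℕ) < (i : ℕ) + m * δ → (N ^ m) i j = 0 := by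
    intro m
    induction m with
    | zero =>
      intro i j hj
      rw [pow_zero]
      exact Matrix.one_apply_ne (fun h => by subst h; omega)
    | succ m ih =>
      intro i j hj
      rw [Nat.succ_mul] at hj
      rw [pow_succ', Matrix.mul_apply]
      apply Finset.sum_eq_zero
      intro l _
      rcases lt_or_ge (l : ℕ) ((i : ℕ) + δ) with hl | hl
      · rw [hzero i l hl, zero_mul]
      · rw [ih l j (by omega), mul_zero]
  -- entries on the (m·δ)-th superdiagonal are nonzero
  have hdiagPow : ∀ m : ℕ, ∀ i j : Fin n, (j : ℕ) = (i : ℕ) + m * δ → (N ^ m) i j ≠ 0 := by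
    intro m
    induction m with
    | zero =>
      intro i j hj
      have : i = j := Fin.ext (by omega)
      subst this
      rw [pow_zero, Matrix.one_apply_eq]
      exact one_ne_zero
    | succ m ih =>
      intro i j hj
      rw [Nat.succ_mul] at hj
      have hjlt := j.isLt
      have hiδ : (i : ℕ) + δ < n := by omega
      set l₀ : Fin n := ⟨(i : ℕ) + δ, hiδ⟩ with hl₀
      rw [pow_succ', Matrix.mul_apply, Finset.sum_eq_single l₀]
      · exact mul_ne_zero (hdiag i l₀ rfl) (ih l₀ j (by simp [hl₀]; omega))
      · intro l _ hne
        rcases lt_or_ge (l : ℕ) ((i : ℕ) + δ) with hl | hl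
        · rw [hzero i l hl, zero_mul]
        · have hlval : (l : ℕ) ≠ (i : ℕ) + δ := fun h => hne (Fin.ext h)
          rw [hzeroPow m l j (by omega), mul_zero]
      · intro h; exact absurd (Finset.mem_univ l₀) h
  -- the rank formula with natural subtraction
  have hrank : ∀ m : ℕ, (N ^ m).rank = n - m * δ := by
    intro m
    rcases le_or_gt n (m * δ) with h | h
    · have hz : N ^ m = 0 := by
        ext i j
        exact hzeroPow m i j (by have := j.isLt; omega)
      rw [hz, Matrix.rank_zero, Nat.sub_eq_zero_of_le h]
    · set r : ℕ := n - m * δ with hr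
      have hrn : r + m * δ = n := by omega
      -- upper bound : N^m = E * R with R having r rows
      have hub : (N ^ m).rank ≤ r := by
        set E : Matrix (Fin n) (Fin r) k :=
          Matrix.of fun i a => if (i : ℕ) = (a : ℕ) then 1 else 0 with hE
        set R : Matrix (Fin r) (Fin n) k :=
          Matrix.of fun a j => (N ^ m) ⟨(a : ℕ), by omega⟩ j with hR
        have hfact : N ^ m = E * R := by
          ext i j
          rw [Matrix.mul_apply]
          rcases lt_or_ge (i : ℕ) r with hi | hi
          · rw [Finset.sum_eq_single ⟨(i : ℕ), hi⟩]
            · simp [hE, hR]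
            · intro b _ hb
              have : (i : ℕ) ≠ (b : ℕ) := fun h => hb (Fin.ext h.symm)
              simp [hE, this]
            · intro h; exact absurd (Finset.mem_univ _) h
          · rw [hzeroPow m i j (by have := j.isLt; omega)]
            refine (Finset.sum_eq_zero ?_).symm
            intro b _
            have : (i : ℕ) ≠ (b : ℕ) := by have := b.isLt; omega
            simp [hE, this]
        calc (N ^ m).rank = (E * R).rank := by rw [hfact]
          _ ≤ R.rank := Matrix.rank_mul_le_right E R
          _ ≤ Fintype.card (Fin r) := Matrix.rank_le_card_height R
          _ = r := Fintype.card_fin r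
      -- lower bound : an invertible r × r submatrix (as a product)
      have hlb : r ≤ (N ^ m).rank := by
        set fa : Fin r → Fin n := fun a => ⟨(a : ℕ), by omega⟩ with hfa
        set gb : Fin r → Fin n := fun b => ⟨(b : ℕ) + m * δ, by omega⟩ with hgb
        set E' : Matrix (Fin r) (Fin n) k :=
          Matrix.of fun a i => if (a : ℕ) = (i : ℕ) then 1 else 0 with hE'
        set F : Matrix (Fin n) (Fin r) k :=
          Matrix.of fun j b => if (j : ℕ) = (b : ℕ) + m * δ then 1 else 0 with hF
        have hT : ∀ (a : Fin r) (j : Fin n), (E' * (N ^ m)) a j = (N ^ m) (fa a) j := by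
          intro a j
          rw [Matrix.mul_apply, Finset.sum_eq_single (fa a)]
          · simp [hE', hfa]
          · intro i _ hi
            have : (a : ℕ) ≠ (i : ℕ) := fun h => hi (Fin.ext h.symm)
            simp [hE', this]
          · intro h; exact absurd (Finset.mem_univ _) h
        have hS : ∀ (a b : Fin r), (E' * (N ^ m) * F) a b = (N ^ m) (fa a) (gb b) := by
          intro a b
          rw [Matrix.mul_apply, Finset.sum_eq_single (gb b)]
          · rw [hT]; simp [hF, hgb]
          · intro j _ hj
            have : (j : ℕ) ≠ (b : ℕ) + m * δ := fun h => hj (Fin.ext h)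
            simp [hF, this]
          · intro h; exact absurd (Finset.mem_univ _) h
        have htri : (E' * (N ^ m) * F).BlockTriangular id := by
          intro a b hab
          have hab' : (b : ℕ) < (a : ℕ) := hab
          rw [hS]
          exact hzeroPow m (fa a) (gb b) (by simp [hfa, hgb]; omega)
        have hdet : (E' * (N ^ m) * F).det ≠ 0 := by
          rw [Matrix.det_of_upperTriangular htri]
          refine Finset.prod_ne_zero_iff.2 fun a _ => ?_
          rw [hS]
          exact hdiagPow m (fa a) (gb a) (by simp [hfa, hgb])
        have hrkS : (E' * (N ^ m) * F).rank = r := by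
          rw [Matrix.rank_of_isUnit _ ((Matrix.isUnit_iff_isUnit_det _).2 hdet.isUnit),
            Fintype.card_fin]
        calc r = (E' * (N ^ m) * F).rank := hrkS.symm
          _ ≤ (E' * (N ^ m)).rank := Matrix.rank_mul_le_left _ _
          _ ≤ (N ^ m).rank := Matrix.rank_mul_le_right _ _
      exact le_antisymm hub hlb
  refine ⟨?_, ?_, ?_⟩
  · intro i
    rw [hrank i]
    rcases le_or_gt (i * δ) n with h | h
    · rw [Nat.cast_sub h, Nat.cast_mul, max_eq_left]
      exact sub_nonneg.2 (by exact_mod_cast h)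
    · rw [Nat.sub_eq_zero_of_le h.le, max_eq_right]
      · simp
      · have : (i : ℤ) * (δ : ℤ) = ((i * δ : ℕ) : ℤ) := by push_cast; ring
        rw [this]
        exact sub_nonpos.2 (by exact_mod_cast h.le)
  · ext i j
    exact hzeroPow ℓ i j (lt_of_lt_of_le j.isLt (le_trans hℓ.1 (Nat.le_add_left _ _)))
  · have hℓpos : 0 < ℓ := by
      rcases Nat.eq_zero_or_pos ℓ with h | h
      · exfalso
        have h1 : n ≤ ℓ * δ := hℓ.1
        rw [h, zero_mul] at h1
        omega
      · exact h
    have hlt : (ℓ - 1) * δ < n := by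
      by_contra h
      push_neg at h
      have := hℓ.2 h
      omega
    intro h0
    have := hdiagPow (ℓ - 1) ⟨0, by omega⟩ ⟨(ℓ - 1) * δ, hlt⟩ (by simp)
    rw [h0] at this
    exact this rfl
end

section
/- Let k be a field and let n ≥ 1 and 1 ≤ ν ≤ n be integers. Let C be the n × n matrix over k with C_{i, ν+i} = 1 for 1 ≤ i ≤ n − ν and all other entries 0, and let D be any invertible upper-triangular n × n matrix over k. Then for every integer i ≥ 0, the rank of (D⁻¹·C)^i equals max(n − i·ν, 0). -/
open Matrix Finset

/-- A matrix is `d`-shifted if it vanishes strictly below the `d`-th superdiagonal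
and is nonzero on the `d`-th superdiagonal. -/
private def ShiftedAux {k : Type*} [Field k] {n : ℕ} (d : ℕ)
    (M : Matrix (Fin n) (Fin n) k) : Prop :=
  (∀ i j : Fin n, (j : ℕ) < (i : ℕ) + d → M i j = 0) ∧
  (∀ i j : Fin n, (j : ℕ) = (i : ℕ) + d → M i j ≠ 0)

private lemma shiftedAux_mul {k : Type*} [Field k] {n : ℕ} {d e : ℕ}
    {M N : Matrix (Fin n) (Fin n) k}
    (hM : ShiftedAux d M) (hN : ShiftedAux e N) : ShiftedAux (d + e) (M * N) := by
  constructor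
  · intro i j hj
    rw [Matrix.mul_apply]
    apply Finset.sum_eq_zero
    intro m _
    by_cases h : (m : ℕ) < (i : ℕ) + d
    · rw [hM.1 i m h, zero_mul]
    · rw [hN.1 m j (by omega), mul_zero]
  · intro i j hj
    have him : (i : ℕ) + d < n := by have := j.isLt; omega
    rw [Matrix.mul_apply, Finset.sum_eq_single (⟨(i : ℕ) + d, him⟩ : Fin n)]
    · exact mul_ne_zero (hM.2 i _ rfl) (hN.2 _ j (by simpa using by omega))
    · intro m _ hm
      by_cases h : (m : ℕ) < (i : ℕ) + d
      · rw [hM.1 i m h, zero_mul]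
      · have hne : (m : ℕ) ≠ (i : ℕ) + d := fun h' => hm (Fin.ext h')
        rw [hN.1 m j (by omega), mul_zero]
    · intro h; exact absurd (Finset.mem_univ _) h

private lemma shiftedAux_rank {k : Type*} [Field k] {n : ℕ} {d : ℕ}
    {M : Matrix (Fin n) (Fin n) k} (hM : ShiftedAux d M) : M.rank = n - d := by
  rcases le_or_gt n d with hnd | hdn
  · -- the matrix is zero
    have hM0 : M = 0 := by
      ext i j
      exact hM.1 i j (by have := j.isLt; omega)
    rw [hM0, Matrix.rank_zero]
    omega
  · -- d < n
    apply le_antisymm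
    · -- upper bound: M factors through k^(n-d)
      set Q₁ : Matrix (Fin n) (Fin (n - d)) k :=
        fun i r => if (i : ℕ) = (r : ℕ) then 1 else 0 with hQ₁
      set Q₂ : Matrix (Fin (n - d)) (Fin n) k :=
        fun r j => if (j : ℕ) = (r : ℕ) then 1 else 0 with hQ₂
      have hQ₂M : ∀ r j, (Q₂ * M) r j = M ⟨(r : ℕ), by omega⟩ j := by
        intro r j
        rw [Matrix.mul_apply, Finset.sum_eq_single (⟨(r : ℕ), by omega⟩ : Fin n)]
        · simp [hQ₂]
        · intro m _ hm
          have : (m : ℕ) ≠ (r : ℕ) := fun h' => hm (Fin.ext (by simpa using h'))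
          simp [hQ₂, this]
        · intro h; exact absurd (Finset.mem_univ _) h
      have hfact : M = Q₁ * (Q₂ * M) := by
        ext i j
        rw [Matrix.mul_apply]
        rcases lt_or_ge (i : ℕ) (n - d) with hi | hi
        · rw [Finset.sum_eq_single (⟨(i : ℕ), hi⟩ : Fin (n - d))]
          · rw [hQ₂M]; simp [hQ₁]
          · intro r _ hr
            have : (i : ℕ) ≠ (r : ℕ) := fun h' => hr (Fin.ext (by simpa using h'.symm))
            simp [hQ₁, this]
          · intro h; exact absurd (Finset.mem_univ _) h
        · rw [hM.1 i j (by have := j.isLt; omega)]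
          apply (Finset.sum_eq_zero _).symm
          intro r _
          have : (i : ℕ) ≠ (r : ℕ) := by have := r.isLt; omega
          simp [hQ₁, this]
      calc M.rank = (Q₁ * (Q₂ * M)).rank := by rw [← hfact]
        _ ≤ (Q₂ * M).rank := Matrix.rank_mul_le_right _ _
        _ ≤ Fintype.card (Fin (n - d)) := Matrix.rank_le_card_height _
        _ = n - d := Fintype.card_fin _
    · -- lower bound: an invertible (n-d) × (n-d) submatrix
      set Q₂ : Matrix (Fin (n - d)) (Fin n) k :=
        fun r j => if (j : ℕ) = (r : ℕ) then 1 else 0 with hQ₂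
      set P : Matrix (Fin n) (Fin (n - d)) k :=
        fun j s => if (j : ℕ) = (s : ℕ) + d then 1 else 0 with hP
      have hMP : ∀ (i : Fin n) (s : Fin (n - d)),
          (M * P) i s = M i ⟨(s : ℕ) + d, by omega⟩ := by
        intro i s
        rw [Matrix.mul_apply, Finset.sum_eq_single (⟨(s : ℕ) + d, by omega⟩ : Fin n)]
        · simp [hP]
        · intro m _ hm
          have : (m : ℕ) ≠ (s : ℕ) + d := fun h' => hm (Fin.ext (by simpa using h'))
          simp [hP, this]
        · intro h; exact absurd (Finset.mem_univ _) h
      have hS : ∀ (r s : Fin (n - d)),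
          (Q₂ * (M * P)) r s = M ⟨(r : ℕ), by omega⟩ ⟨(s : ℕ) + d, by omega⟩ := by
        intro r s
        rw [Matrix.mul_apply, Finset.sum_eq_single (⟨(r : ℕ), by omega⟩ : Fin n)]
        · rw [hMP]; simp [hQ₂]
        · intro m _ hm
          have : (m : ℕ) ≠ (r : ℕ) := fun h' => hm (Fin.ext (by simpa using h'))
          simp [hQ₂, this]
        · intro h; exact absurd (Finset.mem_univ _) h
      have htri : (Q₂ * (M * P)).BlockTriangular id := by
        intro r s hrs
        have hrs' : (s : ℕ) < (r : ℕ) := hrs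
        rw [hS]
        exact hM.1 _ _ (by simpa using by omega)
      have hdetS : (Q₂ * (M * P)).det ≠ 0 := by
        rw [Matrix.det_of_upperTriangular htri]
        apply Finset.prod_ne_zero_iff.mpr
        intro r _
        rw [hS]
        exact hM.2 _ _ (by simp)
      have hunit : IsUnit (Q₂ * (M * P)) :=
        (Matrix.isUnit_iff_isUnit_det _).mpr (isUnit_iff_ne_zero.mpr hdetS)
      calc (n - d : ℕ) = Fintype.card (Fin (n - d)) := (Fintype.card_fin _).symm
        _ = (Q₂ * (M * P)).rank := (Matrix.rank_of_isUnit _ hunit).symm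
        _ ≤ (M * P).rank := Matrix.rank_mul_le_right _ _
        _ ≤ M.rank := Matrix.rank_mul_le_left _ _

/-- Let `C` be the `n × n` matrix with `C_{i, ν+i} = 1` (and all other
entries `0`), and let `D` be an invertible upper-triangular `n × n` matrix over a field
`k`.  Then `rank ((D⁻¹C)ⁱ) = max(n − iν, 0)` for every `i ≥ 0`. -/
theorem inv_triangular_mul_shift_rank_powers
    (k : Type*) [Field k] (n ν : ℕ) (hn : 1 ≤ n) (hν1 : 1 ≤ ν) (hνn : ν ≤ n)
    (C D : Matrix (Fin n) (Fin n) k)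
    (hC : ∀ i j : Fin n, C i j = if (j : ℕ) = (i : ℕ) + ν then 1 else 0)
    (hDtri : ∀ i j : Fin n, (j : ℕ) < (i : ℕ) → D i j = 0)
    (hD : IsUnit D) :
    ∀ i : ℕ, (((D⁻¹ * C) ^ i).rank : ℤ) = max ((n : ℤ) - (i : ℤ) * (ν : ℤ)) 0 := by
  obtain ⟨iD⟩ := hD.nonempty_invertible
  have hDtri' : D.BlockTriangular id := fun i j h => hDtri i j h
  have hinvtri : D⁻¹.BlockTriangular id :=
    Matrix.blockTriangular_inv_of_blockTriangular hDtri'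
  have hdetinv : D⁻¹.det ≠ 0 := by
    have : IsUnit D⁻¹.det :=
      Matrix.isUnit_nonsing_inv_det D ((Matrix.isUnit_iff_isUnit_det D).mp hD)
    exact this.ne_zero
  have hdiag : ∀ i : Fin n, D⁻¹ i i ≠ 0 := by
    intro i hi
    apply hdetinv
    rw [Matrix.det_of_upperTriangular hinvtri]
    exact Finset.prod_eq_zero (Finset.mem_univ i) hi
  have hshift : ShiftedAux ν (D⁻¹ * C) := by
    constructor
    · intro i j hj
      rw [Matrix.mul_apply]
      apply Finset.sum_eq_zero
      intro m _
      by_cases h : (j : ℕ) = (m : ℕ) + ν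
      · have : (m : ℕ) < (i : ℕ) := by omega
        rw [hinvtri (show id m < id i from this), zero_mul]
      · rw [hC, if_neg h, mul_zero]
    · intro i j hj
      rw [Matrix.mul_apply, Finset.sum_eq_single i]
      · rw [hC, if_pos hj, mul_one]; exact hdiag i
      · intro m _ hm
        have : (j : ℕ) ≠ (m : ℕ) + ν := by
          intro h'
          exact hm (Fin.ext (by omega))
        rw [hC, if_neg this, mul_zero]
      · intro h; exact absurd (Finset.mem_univ _) h
  intro i
  have key : ShiftedAux (i * ν) ((D⁻¹ * C) ^ i) := by
    induction i with
    | zero =>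
      rw [pow_zero]
      constructor
      · intro a b hb
        exact Matrix.one_apply_ne (fun h => by omega : a ≠ b)
      · intro a b hb
        have : a = b := Fin.ext (by omega)
        rw [this, Matrix.one_apply_eq]
        exact one_ne_zero
    | succ m ih =>
      rw [pow_succ]
      have := shiftedAux_mul ih hshift
      rwa [show m * ν + ν = (m + 1) * ν by ring] at this
  rw [shiftedAux_rank key]
  rcases le_total (i * ν) n with h | h
  · rw [max_eq_left (by push_cast; omega)]
    push_cast
    omega
  · rw [max_eq_right (by push_cast; omega)]
    push_cast
    omega
end

section
/- Let k be a field, let n ≥ 1 and ν ≥ 1 be integers, and let N be a nilpotent n × n matrix over k such that for every integer i ≥ 0 the rank of N^i equals max(n − i·ν, 0). Let ℓ ≥ 1 and 1 ≤ a ≤ ν be the unique integers with n = (ℓ − 1)·ν + a. Then N is similar over k to the block-diagonal matrix consisting of a Jordan blocks J_ℓ(0) of size ℓ and (ν − a) Jordan blocks J_{ℓ−1}(0) of size ℓ − 1 (all with eigenvalue 0); that is, there exists an invertible n × n matrix P over k with P·N·P⁻¹ equal to that block-diagonal matrix. (Note a·ℓ + (ν − a)·(ℓ − 1) = n, and if ℓ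 = 1 the blocks of size 0 are omitted.) -/
/-!
The rank sequence gives `N ^ ℓ = 0`, `rank N ^ (ℓ - 1) = a` and `rank N ^ (ℓ - 2) = ν + a`
(for `ℓ ≥ 2`; for `ℓ = 1` it says `N = 0`). By rank–nullity, `K = ker N ⊓ range N ^ (ℓ - 2)` has
dimension `ν` and contains `range N ^ (ℓ - 1)`, of dimension `a`. Take a basis of `K` whose first
`a` vectors lie in `range N ^ (ℓ - 1)` and write its `i`-th vector as `N ^ (len i - 1) v i`, with
`len i = ℓ` for `i < a` and `len i = ℓ - 1` otherwise. The Jordan chains `N ^ j v i`, `j < len i`,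
are linearly independent and there are `a ℓ + (ν - a)(ℓ - 1) = n` of them, so they form a basis,
and in this basis `N` is the block-diagonal Jordan matrix.
-/

open Module

theorem Module.End.finrank_ker_inf_range_pow_add {k V : Type*} [Field k] [AddCommGroup V]
    [Module k V] [FiniteDimensional k V] (f : Module.End k V) (m : ℕ) :
    finrank k ↥(LinearMap.ker f ⊓ LinearMap.range (f ^ m)) +
      finrank k (LinearMap.range (f ^ (m + 1))) = finrank k (LinearMap.range (f ^ m)) := by
  have hrange : LinearMap.range (f.domRestrict (LinearMap.range (f ^ m))) =
      LinearMap.range (f ^ (m + 1)) := by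
    rw [LinearMap.range_domRestrict, ← LinearMap.range_comp, pow_succ', Module.End.mul_eq_comp]
  have hker : (LinearMap.ker (f.domRestrict (LinearMap.range (f ^ m)))).map
      (LinearMap.range (f ^ m)).subtype = LinearMap.ker f ⊓ LinearMap.range (f ^ m) := by
    rw [LinearMap.ker_domRestrict, Submodule.map_comap_subtype, inf_comm]
  rw [← hker, Submodule.finrank_map_subtype_eq, ← hrange, add_comm,
    LinearMap.finrank_range_add_finrank_ker]

theorem Submodule.exists_basis_castAdd_mem {k V : Type*} [Field k] [AddCommGroup V]
    [Module k V] [FiniteDimensional k V] {W : Submodule k V} {a m : ℕ} (hW : finrank k W = a)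
    (hV : finrank k V = a + m) :
    ∃ b : Basis (Fin (a + m)) k V, ∀ i : Fin a, b (Fin.castAdd m i) ∈ W := by
  have hQ : finrank k (V ⧸ W) = m := by
    have := W.finrank_quotient_add_finrank
    omega
  let c := finBasisOfFinrankEq k W hW
  let d := finBasisOfFinrankEq k (V ⧸ W) hQ
  choose lift hlift using fun j => W.mkQ_surjective (d j)
  have hli : LinearIndependent k (Sum.elim (fun i => (c i : V)) lift) :=
    c.linearIndependent.sumElim_of_quotient lift (by
      rw [show Submodule.Quotient.mk ∘ lift = ⇑d from funext hlift]
      exact d.linearIndependent)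
  have hli' := (linearIndependent_equiv finSumFinEquiv.symm).mpr hli
  refine ⟨basisOfLinearIndependentOfCardEqFinrank' _ hli' (by simp [hV]), fun i => ?_⟩
  simp

section JordanChain

variable {k V ι : Type*} [CommRing k] [AddCommGroup V] [Module k V]
  (f : Module.End k V) (v : ι → V) (len : ι → ℕ)

/-- Chain vectors are indexed from the bottom, so that `f` lowers the index by one, as the
superdiagonal of `jordanBlock` does. -/
def jordanChain (x : Σ i, Fin (len i)) : V :=
  (f ^ (len x.1 - 1 - x.2)) (v x.1)

variable {f v len}

theorem pow_apply_jordanChain_self (x : Σ i, Fin (len i)) :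
    (f ^ (x.2 : ℕ)) (jordanChain f v len x) = (f ^ (len x.1 - 1)) (v x.1) := by
  rw [jordanChain, ← Module.End.mul_apply, ← pow_add]
  congr 2
  have := x.2.2
  omega

theorem pow_apply_jordanChain_eq_zero (hv : ∀ i, (f ^ len i) (v i) = 0)
    {x : Σ i, Fin (len i)} {s : ℕ} (hs : (x.2 : ℕ) < s) :
    (f ^ s) (jordanChain f v len x) = 0 := by
  have hle : len x.1 ≤ s + (len x.1 - 1 - x.2) := by omega
  rw [jordanChain, ← Module.End.mul_apply, ← pow_add, ← Nat.sub_add_cancel hle, pow_add,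
    Module.End.mul_apply, hv, map_zero]

theorem apply_jordanChain_zero (hv : ∀ i, (f ^ len i) (v i) = 0) {i : ι} (h : 0 < len i) :
    f (jordanChain f v len ⟨i, ⟨0, h⟩⟩) = 0 := by
  simpa using pow_apply_jordanChain_eq_zero hv (s := 1) (x := ⟨i, ⟨0, h⟩⟩) zero_lt_one

theorem apply_jordanChain_succ {i : ι} {t : ℕ} (ht : t + 1 < len i) :
    f (jordanChain f v len ⟨i, ⟨t + 1, ht⟩⟩) = jordanChain f v len ⟨i, ⟨t, by omega⟩⟩ := by
  simp only [jordanChain, ← Module.End.mul_apply, ← pow_succ']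
  congr 2
  omega

theorem linearIndependent_jordanChain [Fintype ι] (hv : ∀ i, (f ^ len i) (v i) = 0)
    (hg : LinearIndependent k fun i => (f ^ (len i - 1)) (v i)) :
    LinearIndependent k (jordanChain f v len) := by
  classical
  rw [Fintype.linearIndependent_iff]
  intro c hc
  by_contra! hne
  -- `f ^ t₀`, for the largest index `t₀` carrying a nonzero coefficient, maps the relation `hc`
  -- to a relation among the bottoms of the chains.
  obtain ⟨x₀, hx₀, hmax⟩ := Finset.exists_max_image {x | c x ≠ 0} (fun x => (x.2 : ℕ))
    (by simpa [Finset.Nonempty] using hne)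
  have hterm : ∀ x, c x • (f ^ (x₀.2 : ℕ)) (jordanChain f v len x) =
      if (x.2 : ℕ) = x₀.2 then c x • (f ^ (len x.1 - 1)) (v x.1) else 0 := by
    intro x
    rcases lt_trichotomy (x.2 : ℕ) x₀.2 with hlt | heq | hgt
    · rw [if_neg hlt.ne, pow_apply_jordanChain_eq_zero hv hlt, smul_zero]
    · rw [if_pos heq, ← heq, pow_apply_jordanChain_self]
    · have : c x = 0 := by
        by_contra h
        exact hgt.not_ge (hmax x (by simpa using h))
      rw [if_neg hgt.ne', this, zero_smul]
  have hrel : ∑ i, (∑ t : Fin (len i), if (t : ℕ) = x₀.2 then c ⟨i, t⟩ else 0) •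
      (f ^ (len i - 1)) (v i) = 0 := by
    have := congrArg (f ^ (x₀.2 : ℕ)) hc
    simp only [map_sum, map_smul, hterm, map_zero] at this
    rw [← this, Fintype.sum_sigma]
    simp only [Finset.sum_smul, ite_smul, zero_smul]
  have := Fintype.linearIndependent_iff.mp hg _ hrel x₀.1
  simp only [← Fin.ext_iff, Finset.sum_ite_eq', Finset.mem_univ, if_true] at this
  exact (Finset.mem_filter.mp hx₀).2 this

theorem toMatrix_eq_blockDiagonal_jordanBlock [Fintype ι] [DecidableEq ι]
    (hv : ∀ i, (f ^ len i) (v i) = 0) (b : Basis (Σ i, Fin (len i)) k V)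
    (hb : ⇑b = jordanChain f v len) :
    LinearMap.toMatrix b b f = Matrix.blockDiagonal' fun i => jordanBlock k (len i) 0 := by
  ext ⟨i, s⟩ ⟨j, t⟩
  rw [LinearMap.toMatrix_apply, hb]
  by_cases hij : i = j
  · subst hij
    rw [Matrix.blockDiagonal'_apply_eq]
    obtain ⟨_ | t, ht⟩ := t
    · simp [apply_jordanChain_zero hv, jordanBlock]
    · rw [apply_jordanChain_succ ht, ← hb, Basis.repr_self, Finsupp.single_apply]
      simp only [jordanBlock, Matrix.of_apply, Sigma.mk.injEq, heq_eq_eq, true_and, Fin.ext_iff]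
      split_ifs <;> first | rfl | omega
  · rw [Matrix.blockDiagonal'_apply_ne _ _ _ hij]
    obtain ⟨_ | t, ht⟩ := t
    · simp [apply_jordanChain_zero hv]
    · rw [apply_jordanChain_succ ht, ← hb, Basis.repr_self, Finsupp.single_apply]
      simp [Ne.symm hij]

end JordanChain

theorem exists_jordanChain_tops {k V : Type*} [Field k] [AddCommGroup V] [Module k V]
    [FiniteDimensional k V] (f : Module.End k V) {ℓ a m : ℕ}
    (hℓ : 2 ≤ ℓ) (hf : f ^ ℓ = 0) (hrank₁ : finrank k (LinearMap.range (f ^ (ℓ - 1))) = a)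
    (hrank₂ : finrank k (LinearMap.range (f ^ (ℓ - 2))) = a + (a + m)) :
    ∃ v : Fin (a + m) → V,
      (∀ i : Fin (a + m), (f ^ (if (i : ℕ) < a then ℓ else ℓ - 1)) (v i) = 0) ∧
      LinearIndependent k fun i : Fin (a + m) =>
        (f ^ ((if (i : ℕ) < a then ℓ else ℓ - 1) - 1)) (v i) := by
  have hKdim : finrank k ↥(LinearMap.ker f ⊓ LinearMap.range (f ^ (ℓ - 2))) = a + m := by
    have := f.finrank_ker_inf_range_pow_add (ℓ - 2)
    rw [show ℓ - 2 + 1 = ℓ - 1 by omega, hrank₁, hrank₂] at this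
    omega
  set K := LinearMap.ker f ⊓ LinearMap.range (f ^ (ℓ - 2))
  have hRK : LinearMap.range (f ^ (ℓ - 1)) ≤ K := by
    rintro _ ⟨x, rfl⟩
    refine Submodule.mem_inf.mpr ⟨?_, (f ^ (ℓ - 2)).mem_range.mpr ⟨f x, ?_⟩⟩
    · rw [LinearMap.mem_ker, ← Module.End.mul_apply, ← pow_succ', Nat.sub_add_cancel (by omega),
        hf, LinearMap.zero_apply]
    · rw [← Module.End.mul_apply, ← pow_succ, show ℓ - 2 + 1 = ℓ - 1 by omega]
  obtain ⟨b, hb⟩ := Submodule.exists_basis_castAdd_mem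
    ((Submodule.comapSubtypeEquivOfLe hRK).finrank_eq.trans hrank₁) hKdim
  have hmem : ∀ i : Fin (a + m),
      (b i : V) ∈ LinearMap.range (f ^ ((if (i : ℕ) < a then ℓ else ℓ - 1) - 1)) := by
    intro i
    split_ifs with h
    · simpa using hb ⟨i, h⟩
    · rw [show ℓ - 1 - 1 = ℓ - 2 by omega]
      exact (b i).2.2
  choose v hv using hmem
  refine ⟨v, fun i => ?_, ?_⟩
  · rw [← Nat.sub_add_cancel (show 1 ≤ if (i : ℕ) < a then ℓ else ℓ - 1 by split_ifs <;> omega),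
      pow_succ', Module.End.mul_apply, hv]
    exact (b i).2.1
  · simp only [hv]
    exact b.linearIndependent.map' K.subtype K.ker_subtype

theorem LinearMap.toMatrix_basis_reindex {k V ι κ : Type*} [CommRing k] [AddCommGroup V]
    [Module k V] [Fintype ι] [DecidableEq ι] [Fintype κ] [DecidableEq κ]
    (b : Basis ι k V) (e : ι ≃ κ) (f : Module.End k V) :
    LinearMap.toMatrix (b.reindex e) (b.reindex e) f =
      Matrix.reindex e e (LinearMap.toMatrix b b f) := by
  ext
  simp [LinearMap.toMatrix_apply]

theorem Matrix.exists_isUnit_mul_mul_inv_eq_toMatrix {k ι : Type*} [CommRing k] [Fintype ι]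
    [DecidableEq ι] (N : Matrix ι ι k) (b : Basis ι k (ι → k)) :
    ∃ P : Matrix ι ι k, IsUnit P ∧ P * N * P⁻¹ = LinearMap.toMatrix b b (Matrix.toLin' N) := by
  let std := Pi.basisFun k ι
  refine ⟨b.toMatrix std, ?_, ?_⟩
  · let := b.invertibleToMatrix std
    exact isUnit_of_invertible _
  · rw [Matrix.inv_eq_right_inv (b.toMatrix_mul_toMatrix_flip std),
      ← basis_toMatrix_mul_linearMap_toMatrix_mul_basis_toMatrix (c' := std) (b' := std),
      LinearMap.toMatrix_eq_toMatrix', LinearMap.toMatrix'_toLin']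

theorem Matrix.exists_isUnit_mul_mul_inv_eq_blockDiagonal_jordanBlock {k ι κ : Type*} [Field k]
    [Fintype ι] [DecidableEq ι] [Fintype κ] [DecidableEq κ] (N : Matrix κ κ k) (len : ι → ℕ)
    (v : ι → κ → k) (hv : ∀ i, (N.toLin' ^ len i) (v i) = 0)
    (hg : LinearIndependent k fun i => (N.toLin' ^ (len i - 1)) (v i))
    (hcard : ∑ i, len i = Fintype.card κ) :
    ∃ e : (Σ i, Fin (len i)) ≃ κ, ∃ P : Matrix κ κ k, IsUnit P ∧
      P * N * P⁻¹ =
        Matrix.reindex e e (Matrix.blockDiagonal' fun i => jordanBlock k (len i) 0) := by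
  have hcard' : Fintype.card (Σ i, Fin (len i)) = Fintype.card κ := by simp [hcard]
  let b := basisOfLinearIndependentOfCardEqFinrank' _ (linearIndependent_jordanChain hv hg)
    (hcard'.trans (finrank_fintype_fun_eq_card k).symm)
  let e := Fintype.equivOfCardEq hcard'
  obtain ⟨P, hP, hPN⟩ := N.exists_isUnit_mul_mul_inv_eq_toMatrix (b.reindex e)
  refine ⟨e, P, hP, ?_⟩
  rw [hPN, LinearMap.toMatrix_basis_reindex,
    toMatrix_eq_blockDiagonal_jordanBlock hv b (coe_basisOfLinearIndependentOfCardEqFinrank' ..)]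

theorem blockDiagonal'_jordanBlock_zero_of_le_one {k ι : Type*} [Zero k] [One k] [DecidableEq ι]
    {len : ι → ℕ} (hlen : ∀ i, len i ≤ 1) :
    Matrix.blockDiagonal' (fun i => jordanBlock k (len i) 0) = 0 := by
  ext ⟨i, s⟩ ⟨j, t⟩
  by_cases hij : i = j
  · subst hij
    have := hlen i
    simp only [Matrix.blockDiagonal'_apply_eq, jordanBlock, Matrix.of_apply, Matrix.zero_apply]
    split_ifs <;> first | rfl | omega
  · rw [Matrix.blockDiagonal'_apply_ne _ _ _ hij, Matrix.zero_apply]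

theorem nilpotent_rank_sequence_jordan_form_general
    (k : Type*) [Field k] (n ν ℓ a : ℕ)
    (hℓ : 1 ≤ ℓ) (haν : a ≤ ν) (hsum : n = (ℓ - 1) * ν + a)
    (N : Matrix (Fin n) (Fin n) k)
    (hrank : ∀ i : ℕ, ((N ^ i).rank : ℤ) = max ((n : ℤ) - (i : ℤ) * (ν : ℤ)) 0) :
    ∃ e : ((i : Fin ν) × Fin (if (i : ℕ) < a then ℓ else ℓ - 1)) ≃ Fin n,
      ∃ P : Matrix (Fin n) (Fin n) k, IsUnit P ∧
        P * N * P⁻¹ =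
          (Matrix.reindex e e)
            (Matrix.blockDiagonal'
              (fun i : Fin ν => jordanBlock k (if (i : ℕ) < a then ℓ else ℓ - 1) 0)) := by
  obtain ⟨m, rfl⟩ := Nat.exists_eq_add_of_le haν
  have hr : ∀ i, finrank k (LinearMap.range (N.toLin' ^ i)) = n - i * (a + m) := fun i => by
    have := hrank i
    rw [Matrix.rank, ← Matrix.toLin'_apply', Matrix.toLin'_pow] at this
    omega
  have hcard : ∑ i : Fin (a + m), (if (i : ℕ) < a then ℓ else ℓ - 1) = Fintype.card (Fin n) := by
    simp only [Fin.sum_univ_add, Fin.val_castAdd, Fin.is_lt, if_true, Fin.val_natAdd,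
      add_lt_iff_neg_left, not_lt_zero, if_false, Finset.sum_const, Finset.card_univ,
      Fintype.card_fin, smul_eq_mul, hsum]
    zify [hℓ]
    ring
  have hnil : N.toLin' ^ ℓ = 0 := by
    rw [← LinearMap.range_eq_bot, ← Submodule.finrank_eq_zero, hr, Nat.sub_eq_zero_iff_le, hsum]
    zify [hℓ]
    nlinarith
  rcases hℓ.eq_or_lt with rfl | hℓ
  · obtain rfl : N = 0 := Matrix.toLin'.injective (by simpa using hnil)
    refine ⟨Fintype.equivOfCardEq (by simpa using hcard), 1, isUnit_one, ?_⟩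
    rw [blockDiagonal'_jordanBlock_zero_of_le_one fun i => by split_ifs <;> omega]
    simp
  · have hℓν : (ℓ - 2) * (a + m) + (a + m) = (ℓ - 1) * (a + m) := by
      rw [← Nat.succ_mul, show (ℓ - 2).succ = ℓ - 1 by omega]
    obtain ⟨v, hv, hg⟩ := exists_jordanChain_tops N.toLin' (a := a) (m := m) hℓ hnil
      (by rw [hr]; omega) (by rw [hr]; omega)
    exact N.exists_isUnit_mul_mul_inv_eq_blockDiagonal_jordanBlock _ v hv hg hcard

/-- Let `N` be a nilpotent `n × n` matrix over a field `k` with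
`rank (Nⁱ) = max(n − iν, 0)` for all `i ≥ 0`, and let `ℓ ≥ 1`, `1 ≤ a ≤ ν` be the
unique integers with `n = (ℓ−1)ν + a`.  Then `N` is similar over `k` to the
block-diagonal matrix consisting of `a` Jordan blocks `J_ℓ(0)` and `ν − a` Jordan
blocks `J_{ℓ−1}(0)` (up to an identification of the index types, realized by an
equivalence `e`). -/
theorem nilpotent_rank_sequence_jordan_form
    (k : Type*) [Field k] (n ν ℓ a : ℕ) (hn : 1 ≤ n) (hν : 1 ≤ ν)
    (hℓ : 1 ≤ ℓ) (ha1 : 1 ≤ a) (haν : a ≤ ν) (hsum : n = (ℓ - 1) * ν + a)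
    (N : Matrix (Fin n) (Fin n) k) (hnil : IsNilpotent N)
    (hrank : ∀ i : ℕ, ((N ^ i).rank : ℤ) = max ((n : ℤ) - (i : ℤ) * (ν : ℤ)) 0) :
    ∃ e : ((i : Fin ν) × Fin (if (i : ℕ) < a then ℓ else ℓ - 1)) ≃ Fin n,
      ∃ P : Matrix (Fin n) (Fin n) k, IsUnit P ∧
        P * N * P⁻¹ =
          (Matrix.reindex e e)
            (Matrix.blockDiagonal'
              (fun i : Fin ν => jordanBlock k (if (i : ℕ) < a then ℓ else ℓ - 1) 0)) :=
  nilpotent_rank_sequence_jordan_form_general k n ν ℓ a hℓ haν hsum N hrank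
end
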